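/- arXiv:1404.0263 — 7 statements merged into one kernel-verified Lean document; each statement's English description precedes it below -/
import Mathlib

section
/- Let G be an abelian group and let f : G → ℂ be a generalized polynomial. Then f is a polynomial if and only if the variety τ(f) generated by f is a finite-dimensional complex vector space. -/
/-- The difference operator: `(Δ_y f)(x) = f(x+y) - f(x)`. -/
def diffOp {G : Type*} [AddCommGroup G] (y : G) (f : G → ℂ) : G → ℂ :=
  fun x => f (x + y) - f x

/-- `f` is a generalized polynomial: some iterated difference of order `n+1` always vanishes. -/
def IsGenPoly {G : Type*} [AddCommGroup G] (f : G → ℂ) : Prop :=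
  ∃ n : ℕ, ∀ ys : List G, ys.length = n + 1 → ys.foldr diffOp f = 0

/-- An additive function is a homomorphism of `G` into `(ℂ, +)`. -/
def IsAdditiveFn {G : Type*} [AddCommGroup G] (a : G → ℂ) : Prop :=
  ∀ x y : G, a (x + y) = a x + a y

/-- `f` is a polynomial: it belongs to the complex function algebra generated by the
additive functions (constants lie in every subalgebra). -/
def IsPolyFn {G : Type*} [AddCommGroup G] (f : G → ℂ) : Prop :=
  f ∈ Algebra.adjoin ℂ {a : G → ℂ | IsAdditiveFn a}

/-- The variety `τ(f)`: smallest translation-invariant linear subspace of `ℂ^G`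
containing `f` which is closed under pointwise convergence. -/
noncomputable def variety {G : Type*} [AddCommGroup G] (f : G → ℂ) :
    Submodule ℂ (G → ℂ) :=
  (Submodule.span ℂ {g : G → ℂ | ∃ y : G, g = fun x => f (x + y)}).topologicalClosure

/-!
The translates of a polynomial span a finite-dimensional, hence closed, subspace, so `τ(f)` is
finite-dimensional. Conversely, if `τ(f)` is finite-dimensional then so is the span `V` of the
translates of `f`, and translation is a representation `S` of `G` on `V`; since `f` is a
generalized polynomial, every `S y` is unipotent. The truncated logarithm `L y = log (S y)` is
additive in `y`, because `log ((1 + a) (1 + b)) = log (1 + a) + log (1 + b)` for commuting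
nilpotent `a`, `b`: both sides are the linear coefficient of the polynomial
`m ↦ ((1 + a) (1 + b))^m = (1 + a)^m (1 + b)^m`, the right side because both factors have
constant term `1`. Inverting the logarithm expresses `S y` as a polynomial in `L y`, so
`f y = (S y f) 0` is a polynomial in the matrix coefficients of `L`, which are additive functions.
-/

open Polynomial

namespace Polynomial

theorem eq_zero_of_forall_eval_natCast_eq_zero {B : Type*} [CommRing B] [IsAddTorsionFree B]
    {p : B[X]} (hp : ∀ m : ℕ, p.eval (m : B) = 0) : p = 0 := by
  nontriviality B
  induction hd : p.natDegree using Nat.strong_induction_on generalizing p with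
  | _ d ih =>
    -- `p = X * q`, and `q (· + 1)` again vanishes on `ℕ` but has smaller degree
    obtain ⟨q, rfl⟩ : X ∣ p := X_dvd_iff.2 (by simpa [coeff_zero_eq_eval_zero] using hp 0)
    by_contra hne
    have hq : q ≠ 0 := by rintro rfl; simp at hne
    have hshift : ∀ m : ℕ, (taylor 1 q).eval (m : B) = 0 := fun m => by
      have h := hp (m + 1)
      rw [eval_mul, eval_X, ← nsmul_eq_mul] at h
      rw [taylor_eval, ← Nat.cast_add_one]
      exact IsAddTorsionFree.nsmul_right_injective m.succ_ne_zero (h.trans (smul_zero _).symm)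
    have := ih _ (by rw [← hd, natDegree_X_mul hq, natDegree_taylor]; omega) hshift rfl
    exact hq (taylor_injective 1 (this.trans (map_zero _).symm))

theorem eq_of_forall_eval_natCast_eq {B : Type*} [CommRing B] [IsAddTorsionFree B]
    {p q : B[X]} (h : ∀ m : ℕ, p.eval (m : B) = q.eval (m : B)) : p = q :=
  sub_eq_zero.1 <| eq_zero_of_forall_eval_natCast_eq_zero fun m => by rw [eval_sub, h, sub_self]

end Polynomial

theorem isAddTorsionFree_of_algebra (K : Type*) [Field K] [CharZero K] {B : Type*} [Ring B]
    [Algebra K B] : IsAddTorsionFree B :=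
  ⟨fun m hm a b h => by
    have := congrArg ((m : K)⁻¹ • ·) h
    simpa [← Nat.cast_smul_eq_nsmul K, smul_smul, hm] using this⟩

theorem one_add_pow_eq_sum_range_of_pow_eq_zero {R : Type*} [CommSemiring R] {x : R} {n : ℕ}
    (hx : x ^ (n + 1) = 0) (m : ℕ) :
    (1 + x) ^ m = ∑ k ∈ Finset.range (n + 1), x ^ k * m.choose k := by
  rw [add_comm, add_pow]
  calc ∑ k ∈ Finset.range (m + 1), x ^ k * 1 ^ (m - k) * m.choose k
      = ∑ k ∈ Finset.range (m + n + 1), x ^ k * m.choose k := by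
        simp only [one_pow, mul_one]
        refine Finset.sum_subset (Finset.range_subset_range.2 (by omega)) fun k _ hk => ?_
        rw [Nat.choose_eq_zero_of_lt (by simpa using hk), Nat.cast_zero, mul_zero]
    _ = ∑ k ∈ Finset.range (n + 1), x ^ k * m.choose k := by
        refine (Finset.sum_subset (Finset.range_subset_range.2 (by omega)) fun k _ hk => ?_).symm
        rw [pow_eq_zero_of_le (by simpa using hk) hx, zero_mul]

theorem exists_X_pow_dvd_X_sub_comp {R : Type*} [CommRing R] {P : R[X]} (h0 : P.coeff 0 = 0)
    (h1 : P.coeff 1 = 1) (n : ℕ) : ∃ E : R[X], X ^ (n + 1) ∣ X - E.comp P := by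
  obtain ⟨Q, rfl⟩ : X ∣ P := X_dvd_iff.2 h0
  have hQ : Q.coeff 0 = 1 := by rwa [coeff_X_mul] at h1
  induction n with
  | zero => exact ⟨X, by simp⟩
  | succ n ih =>
    obtain ⟨E, t, ht⟩ := ih
    refine ⟨E + C (t.coeff 0) * X ^ (n + 1), ?_⟩
    obtain ⟨s, hs⟩ : X ∣ t - C (t.coeff 0) * Q ^ (n + 1) := by
      rw [X_dvd_iff, coeff_sub, coeff_C_mul, coeff_zero_eq_eval_zero (Q ^ _), eval_pow,
        ← coeff_zero_eq_eval_zero, hQ, one_pow, mul_one, sub_self]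
    refine ⟨s, ?_⟩
    rw [add_comp, mul_comp, C_comp, X_pow_comp, ← sub_sub, ht, mul_pow]
    linear_combination X ^ (n + 1) * hs

section TruncatedLog

variable (K : Type*) [Field K] [CharZero K]

noncomputable def choosePoly (k : ℕ) : K[X] := C (k.factorial : K)⁻¹ * descPochhammer K k

noncomputable def logPoly (n : ℕ) : K[X] := PowerSeries.trunc (n + 1) (PowerSeries.log K)

variable {K}

theorem eval_natCast_choosePoly (k m : ℕ) : (choosePoly K k).eval (m : K) = m.choose k := by
  rw [choosePoly, eval_mul, eval_C, Nat.cast_choose_eq_descPochhammer_div, inv_mul_eq_div]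

theorem coeff_zero_choosePoly (k : ℕ) : (choosePoly K k).coeff 0 = if k = 0 then 1 else 0 := by
  rw [coeff_zero_eq_eval_zero, ← Nat.cast_zero, eval_natCast_choosePoly]
  rcases k with _ | k <;> simp

theorem coeff_one_choosePoly (k : ℕ) :
    (choosePoly K k).coeff 1 = PowerSeries.coeff k (PowerSeries.log K) := by
  rcases k with _ | k
  · simp [choosePoly, coeff_one]
  have hprod : ∏ j ∈ Finset.range k, ((-1 : K) - j) = (-1) ^ k * k.factorial := by
    induction k with
    | zero => simp
    | succ k ih => rw [Finset.prod_range_succ, ih, Nat.factorial_succ]; push_cast; ring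
  rw [choosePoly, coeff_C_mul, descPochhammer_succ_left, coeff_X_mul, coeff_zero_eq_eval_zero,
    eval_comp, eval_sub, eval_X, eval_one, zero_sub, descPochhammer_eval_eq_prod_range, hprod,
    PowerSeries.coeff_log, if_neg k.succ_ne_zero, Nat.factorial_succ]
  have : (k.factorial : K) ≠ 0 := Nat.cast_ne_zero.2 k.factorial_ne_zero
  push_cast
  field_simp
  ring

theorem aeval_logPoly {A : Type*} [Semiring A] [Algebra K A] (n : ℕ) (x : A) :
    aeval x (logPoly K n) =
      ∑ k ∈ Finset.range (n + 1), PowerSeries.coeff k (PowerSeries.log K) • x ^ k := by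
  rw [logPoly, aeval_eq_sum_range' (PowerSeries.natDegree_trunc_lt _ _)]
  refine Finset.sum_congr rfl fun k hk => ?_
  rw [PowerSeries.coeff_trunc, if_pos (Finset.mem_range.1 hk)]

theorem coeff_zero_logPoly (n : ℕ) : (logPoly K n).coeff 0 = 0 := by
  simp [logPoly, PowerSeries.coeff_trunc]

theorem coeff_one_logPoly {n : ℕ} (hn : 1 ≤ n) : (logPoly K n).coeff 1 = 1 := by
  simp [logPoly, PowerSeries.coeff_trunc]
  omega

end TruncatedLog

section PowPoly

variable (K : Type*) [Field K] [CharZero K] {B : Type*} [CommRing B] [Algebra K B]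

/-- For `x ^ (n + 1) = 0`, this is `(1 + x) ^ X` as a polynomial in `X`. -/
noncomputable def powPoly (n : ℕ) (x : B) : B[X] :=
  ∑ k ∈ Finset.range (n + 1), C (x ^ k) * (choosePoly K k).map (algebraMap K B)

variable {K}

theorem eval_natCast_powPoly {n : ℕ} {x : B} (hx : x ^ (n + 1) = 0) (m : ℕ) :
    (powPoly K n x).eval (m : B) = (1 + x) ^ m := by
  rw [one_add_pow_eq_sum_range_of_pow_eq_zero hx, powPoly, eval_finsetSum]
  refine Finset.sum_congr rfl fun k _ => ?_
  rw [eval_mul, eval_C, eval_map_algebraMap, ← map_natCast (algebraMap K B),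
    aeval_algebraMap_apply_eq_algebraMap_eval, eval_natCast_choosePoly, map_natCast]

theorem coeff_zero_powPoly (n : ℕ) (x : B) : (powPoly K n x).coeff 0 = 1 := by
  simp [powPoly, finsetSum_coeff, coeff_map, coeff_zero_choosePoly]

theorem coeff_one_powPoly (n : ℕ) (x : B) :
    (powPoly K n x).coeff 1 = aeval x (logPoly K n) := by
  rw [aeval_logPoly, powPoly, finsetSum_coeff]
  refine Finset.sum_congr rfl fun k _ => ?_
  rw [coeff_C_mul, coeff_map, coeff_one_choosePoly, Algebra.smul_def, mul_comm]

theorem aeval_logPoly_mul_sub_one {n : ℕ} {a b : B} (ha : a ^ (n + 1) = 0)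
    (hb : b ^ (n + 1) = 0) (hc : ((1 + a) * (1 + b) - 1) ^ (n + 1) = 0) :
    aeval ((1 + a) * (1 + b) - 1) (logPoly K n) =
      aeval a (logPoly K n) + aeval b (logPoly K n) := by
  have := isAddTorsionFree_of_algebra K (B := B)
  have hmul : powPoly K n ((1 + a) * (1 + b) - 1) = powPoly K n a * powPoly K n b :=
    eq_of_forall_eval_natCast_eq fun m => by
      rw [eval_mul, eval_natCast_powPoly hc, eval_natCast_powPoly ha, eval_natCast_powPoly hb,
        add_sub_cancel, mul_pow]
  simpa [coeff_mul, Finset.Nat.antidiagonal_succ, coeff_zero_powPoly, coeff_one_powPoly,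
    add_comm] using congrArg (coeff · 1) hmul

end PowPoly

open scoped IsMulCommutative in
theorem Commute.aeval_logPoly_mul_sub_one {K : Type*} [Field K] [CharZero K] {A : Type*} [Ring A]
    [Algebra K A] {a b : A} (hab : Commute a b) {n : ℕ} (ha : a ^ (n + 1) = 0)
    (hb : b ^ (n + 1) = 0) (hc : ((1 + a) * (1 + b) - 1) ^ (n + 1) = 0) :
    aeval ((1 + a) * (1 + b) - 1) (logPoly K n) =
      aeval a (logPoly K n) + aeval b (logPoly K n) := by
  let B := Algebra.adjoin K {a, b}
  have : IsMulCommutative B := Algebra.isMulCommutative_adjoin K <| by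
    simp only [Set.mem_insert_iff, Set.mem_singleton_iff]
    rintro x (rfl | rfl) y (rfl | rfl) <;> first | rfl | exact hab | exact hab.symm
  let a' : B := ⟨a, Algebra.subset_adjoin (by simp)⟩
  let b' : B := ⟨b, Algebra.subset_adjoin (by simp)⟩
  have h := congrArg B.val <| _root_.aeval_logPoly_mul_sub_one (K := K) (a := a') (b := b')
    (n := n) (Subtype.ext ha) (Subtype.ext hb) (Subtype.ext hc)
  rwa [map_add, ← aeval_algHom_apply, ← aeval_algHom_apply, ← aeval_algHom_apply] at h

section PolynomialMatrixCoefficients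

variable {G : Type*} [AddCommGroup G] {V : Type*} [AddCommGroup V] [Module ℂ V]
  [FiniteDimensional ℂ V] {L : G → Module.End ℂ V}

theorem isPolyFn_dual_apply_pow (hL : ∀ y z, L (y + z) = L y + L z) (v : V) (j : ℕ)
    (ψ : Module.Dual ℂ V) : IsPolyFn fun y => ψ ((L y ^ j) v) := by
  induction j generalizing ψ with
  | zero => exact Subalgebra.algebraMap_mem _ (ψ v)
  | succ j ih =>
    let b := Module.finBasis ℂ V
    have hexpand : (fun y => ψ ((L y ^ (j + 1)) v)) =
        ∑ i, (fun y => b.coord i ((L y ^ j) v)) * fun y => ψ (L y (b i)) := by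
      ext y
      rw [pow_succ', Module.End.mul_apply]
      conv_lhs => rw [← b.sum_repr ((L y ^ j) v)]
      simp only [map_sum, map_smul, smul_eq_mul, Finset.sum_apply, Pi.mul_apply,
        Module.Basis.coord_apply]
    rw [hexpand]
    refine Subalgebra.sum_mem _ fun i _ => Subalgebra.mul_mem _ (ih _) (Algebra.subset_adjoin ?_)
    intro x y
    simp [hL]

theorem isPolyFn_dual_apply_aeval (hL : ∀ y z, L (y + z) = L y + L z) (Q : ℂ[X])
    (ψ : Module.Dual ℂ V) (v : V) : IsPolyFn fun y => ψ (aeval (L y) Q v) := by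
  have hexpand : (fun y => ψ (aeval (L y) Q v)) =
      ∑ j ∈ Finset.range (Q.natDegree + 1), Q.coeff j • fun y => ψ ((L y ^ j) v) := by
    ext y
    simp [aeval_eq_sum_range, Finset.sum_apply, map_sum]
  rw [hexpand]
  exact Subalgebra.sum_mem _ fun j _ => Subalgebra.smul_mem _ (isPolyFn_dual_apply_pow hL v j ψ) _

theorem isPolyFn_dual_apply_of_unipotent {S : G → Module.End ℂ V}
    (hS : ∀ y z, S (y + z) = S y * S z) {n : ℕ} (hn : ∀ y, (S y - 1) ^ (n + 1) = 0)
    (ψ : Module.Dual ℂ V) (v : V) : IsPolyFn fun y => ψ (S y v) := by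
  -- truncating the logarithm at degree `n + 1 ≥ 1` keeps its linear coefficient
  have hn' : ∀ y, (S y - 1) ^ (n + 1 + 1) = 0 := fun y => pow_eq_zero_of_le (by omega) (hn y)
  have hcomm : ∀ y z, Commute (S y - 1) (S z - 1) := fun y z => by
    have : Commute (S y) (S z) := by rw [Commute, SemiconjBy, ← hS, ← hS, add_comm]
    exact (this.sub_left (Commute.one_left _)).sub_right (Commute.one_right _)
  set L := fun y => aeval (S y - 1) (logPoly ℂ (n + 1))
  have hL : ∀ y z, L (y + z) = L y + L z := fun y z => by
    have h := (hcomm y z).aeval_logPoly_mul_sub_one (K := ℂ) (hn' y) (hn' z)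
      (by simpa [hS] using hn' (y + z))
    simpa [L, hS] using h
  obtain ⟨E, t, hE⟩ := exists_X_pow_dvd_X_sub_comp (coeff_zero_logPoly (K := ℂ) (n + 1))
    (coeff_one_logPoly le_add_self) (n + 1)
  have hSE : ∀ y, S y = aeval (L y) (1 + E) := fun y => by
    have h := congrArg (aeval (S y - 1)) hE
    rw [map_sub, aeval_X, aeval_comp, map_mul, map_pow, aeval_X, hn' y, zero_mul,
      sub_eq_zero] at h
    rw [map_add, map_one, ← h, add_sub_cancel]
  simp_rw [hSE]
  exact isPolyFn_dual_apply_aeval hL _ ψ v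

end PolynomialMatrixCoefficients

section Translation

variable {G : Type*} [AddCommGroup G]

def translation (y : G) : Module.End ℂ (G → ℂ) := LinearMap.funLeft ℂ ℂ (· + y)

@[simp]
theorem translation_apply (y : G) (g : G → ℂ) (x : G) : translation y g x = g (x + y) := rfl

theorem translation_add (y z : G) : translation (y + z) = translation y * translation z := by
  ext g x
  simp [add_assoc]

theorem translation_zero : translation (0 : G) = 1 := by
  ext g x
  simp

theorem commute_translation (y z : G) : Commute (translation y) (translation z) := by
  rw [Commute, SemiconjBy, ← translation_add, ← translation_add, add_comm]

noncomputable def translateSpan (f : G → ℂ) : Submodule ℂ (G → ℂ) :=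
  Submodule.span ℂ (Set.range fun y => translation y f)

theorem variety_eq_topologicalClosure (f : G → ℂ) :
    variety f = (translateSpan f).topologicalClosure := by
  simp only [variety, translateSpan, Set.range]
  congr 2
  ext g
  exact exists_congr fun y => eq_comm

theorem translation_mem_translateSpan (f : G → ℂ) (y : G) :
    translation y f ∈ translateSpan f :=
  Submodule.subset_span ⟨y, rfl⟩

theorem self_mem_translateSpan (f : G → ℂ) : f ∈ translateSpan f := by
  simpa [translation_zero] using translation_mem_translateSpan f 0

theorem translateSpan_le_iff {f : G → ℂ} {p : Submodule ℂ (G → ℂ)} :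
    translateSpan f ≤ p ↔ ∀ y, translation y f ∈ p := by
  rw [translateSpan, Submodule.span_le, Set.range_subset_iff]
  rfl

theorem translation_mem_translateSpan_of_mem {f g : G → ℂ} (hg : g ∈ translateSpan f)
    (y : G) : translation y g ∈ translateSpan f := by
  suffices translateSpan f ≤ (translateSpan f).comap (translation y) from this hg
  refine translateSpan_le_iff.2 fun z => ?_
  rw [Submodule.mem_comap, ← Module.End.mul_apply, ← translation_add, add_comm]
  exact translation_mem_translateSpan f (z + y)

theorem variety_eq_translateSpan {f : G → ℂ} [FiniteDimensional ℂ (translateSpan f)] :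
    variety f = translateSpan f := by
  rw [variety_eq_topologicalClosure]
  exact (Submodule.closed_of_finiteDimensional _).submodule_topologicalClosure_eq

theorem finiteDimensional_variety_iff {f : G → ℂ} :
    FiniteDimensional ℂ (variety f) ↔ FiniteDimensional ℂ (translateSpan f) := by
  refine ⟨fun _ => Submodule.finiteDimensional_of_le (S₂ := variety f) ?_,
    fun _ => variety_eq_translateSpan (f := f) ▸ inferInstance⟩
  rw [variety_eq_topologicalClosure]
  exact Submodule.le_topologicalClosure _

end Translation

section TranslationFinite

variable (G : Type*) [AddCommGroup G]

noncomputable def translationFinite : Subalgebra ℂ (G → ℂ) where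
  carrier := {g | (translateSpan g).FG}
  mul_mem' {g h} hg hh := (hg.mul hh).of_le <| translateSpan_le_iff.2 fun y =>
    Submodule.mul_mem_mul (translation_mem_translateSpan g y) (translation_mem_translateSpan h y)
  add_mem' {g h} hg hh := (hg.sup hh).of_le <| translateSpan_le_iff.2 fun y => by
    rw [map_add]
    exact Submodule.add_mem_sup (translation_mem_translateSpan g y)
      (translation_mem_translateSpan h y)
  algebraMap_mem' c := (Submodule.fg_span_singleton (algebraMap ℂ (G → ℂ) c)).of_le
    (translateSpan_le_iff.2 fun _ => Submodule.mem_span_singleton_self _)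

variable {G}

theorem mem_translationFinite {g : G → ℂ} :
    g ∈ translationFinite G ↔ (translateSpan g).FG :=
  Iff.rfl

theorem IsAdditiveFn.mem_translationFinite {a : G → ℂ} (ha : IsAdditiveFn a) :
    a ∈ translationFinite G := by
  refine _root_.mem_translationFinite.2 <|
    (Submodule.fg_span (Set.toFinite {a, 1})).of_le (translateSpan_le_iff.2 fun y => ?_)
  have : translation y a = a + a y • 1 := by
    ext x
    simp [ha x y]
  rw [this]
  exact add_mem (Submodule.subset_span (by simp))
    (Submodule.smul_mem _ _ (Submodule.subset_span (by simp)))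

theorem IsPolyFn.finiteDimensional_translateSpan {f : G → ℂ} (hf : IsPolyFn f) :
    FiniteDimensional ℂ (translateSpan f) :=
  Module.Finite.iff_fg.2 <| mem_translationFinite.1 <|
    Algebra.adjoin_le (fun _ ha => IsAdditiveFn.mem_translationFinite ha) hf

end TranslationFinite

section GeneralizedPolynomial

variable {G : Type*} [AddCommGroup G]

theorem foldr_diffOp_eq_list_prod (ys : List G) (g : G → ℂ) :
    ys.foldr diffOp g = (ys.map fun y => translation y - 1).prod g := by
  induction ys with
  | nil => rfl
  | cons y ys ih => rw [List.foldr_cons, ih]; rfl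

theorem translateSpan_le_ker_list_prod {f : G → ℂ} {ys : List G} (hf : ys.foldr diffOp f = 0) :
    translateSpan f ≤ LinearMap.ker (ys.map fun y => translation y - 1).prod := by
  refine translateSpan_le_iff.2 fun z => ?_
  have hcomm : Commute (translation z) (ys.map fun y => translation y - 1).prod :=
    Commute.list_prod_right _ _ fun _ h => by
      obtain ⟨y, -, rfl⟩ := List.mem_map.1 h
      exact (commute_translation z y).sub_right (Commute.one_right _)
  rw [LinearMap.mem_ker, ← Module.End.mul_apply, ← hcomm.eq, Module.End.mul_apply,
    ← foldr_diffOp_eq_list_prod, hf, map_zero]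

theorem translation_sub_one_pow_eq_zero_of_mem {f g : G → ℂ} {n : ℕ}
    (hf : ∀ ys : List G, ys.length = n + 1 → ys.foldr diffOp f = 0) (hg : g ∈ translateSpan f)
    (y : G) : ((translation y - 1) ^ (n + 1)) g = 0 := by
  have := translateSpan_le_ker_list_prod (hf (List.replicate (n + 1) y) List.length_replicate) hg
  rwa [List.map_replicate, List.prod_replicate, LinearMap.mem_ker] at this

theorem IsGenPoly.isPolyFn_of_finiteDimensional {f : G → ℂ} (hf : IsGenPoly f)
    [FiniteDimensional ℂ (translateSpan f)] : IsPolyFn f := by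
  obtain ⟨n, hn⟩ := hf
  let V := translateSpan f
  let S : G → Module.End ℂ V := fun y =>
    (translation y).restrict fun _ hg => translation_mem_translateSpan_of_mem hg y
  have hS : ∀ y z, S (y + z) = S y * S z := fun y z => by
    ext v : 2
    simp [S, translation_add]
  have hSpow : ∀ y k (v : V), (((S y - 1 : Module.End ℂ V) ^ k) v : G → ℂ) =
      ((translation y - 1 : Module.End ℂ (G → ℂ)) ^ k) v := by
    intro y k
    induction k with
    | zero => intro v; rfl
    | succ k ih =>
      intro v
      rw [pow_succ', Module.End.mul_apply, pow_succ', Module.End.mul_apply, ← ih]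
      rfl
  have hunip : ∀ y, (S y - 1) ^ (n + 1) = 0 := fun y => LinearMap.ext fun v =>
    Subtype.ext <| (hSpow y (n + 1) v).trans (translation_sub_one_pow_eq_zero_of_mem hn v.2 y)
  simpa [S] using isPolyFn_dual_apply_of_unipotent hS hunip
    ((LinearMap.proj 0).comp V.subtype) ⟨f, self_mem_translateSpan f⟩

end GeneralizedPolynomial

/-- Theorem 1 (char1): a generalized polynomial is a polynomial if and only if its
variety is a finite-dimensional complex vector space. -/
theorem genPoly_isPoly_iff_finiteDimensional_variety
    {G : Type*} [AddCommGroup G] (f : G → ℂ) (hf : IsGenPoly f) :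
    IsPolyFn f ↔ FiniteDimensional ℂ ↥(variety f) := by
  rw [finiteDimensional_variety_iff]
  exact ⟨IsPolyFn.finiteDimensional_translateSpan, fun _ => hf.isPolyFn_of_finiteDimensional⟩
end

section
/- Let G be a finitely generated abelian group. Then every generalized polynomial f : G → ℂ is a polynomial. -/
open Finset Function fwdDiff
open scoped DirectSum

section FwdDiff

variable {M A : Type*} [AddCommGroup M] [AddCommGroup A]

theorem fwdDiff_comm (y z : M) (f : M → A) : Δ_[y] (Δ_[z] f) = Δ_[z] (Δ_[y] f) := by
  ext x
  simp only [fwdDiff, add_right_comm x y z]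
  abel

theorem fwdDiff_eq_zero_iff_periodic {y : M} {f : M → A} : Δ_[y] f = 0 ↔ Periodic f y := by
  simp only [funext_iff, fwdDiff, Pi.zero_apply, sub_eq_zero, Periodic]

theorem shift_zsmul_eq_sum_choose_smul_fwdDiff_iter {y : M} {f : M → A} {n : ℕ}
    (hf : Δ_[y] ^[n] f = 0) (x : M) (m : ℤ) :
    f (x + m • y) = ∑ j ∈ range n, Ring.choose m j • Δ_[y] ^[j] f x := by
  induction n generalizing f m with
  | zero => simp [show f = 0 from hf]
  | succ n ih =>
    have hΔf : Δ_[y] ^[n] (Δ_[y] f) = 0 := by rwa [← iterate_succ_apply]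
    let err : ℤ → A := fun m ↦ f (x + m • y) - ∑ j ∈ range (n + 1), Ring.choose m j • Δ_[y] ^[j] f x
    have h_periodic : Periodic err 1 := by
      intro m
      have hstep : f (x + (m + 1) • y) = f (x + m • y) + Δ_[y] f (x + m • y) := by
        simp only [fwdDiff, add_smul, one_smul, add_assoc, add_sub_cancel]
      simp only [err]
      rw [hstep, ih hΔf, sum_range_succ' _ n, sum_range_succ' (fun j ↦ Ring.choose m j • _) n]
      simp only [Ring.choose_succ_succ, Ring.choose_zero_right, add_smul, sum_add_distrib,
        iterate_succ_apply]
      abel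
    simpa [err, sub_eq_zero, Ring.choose_zero_right, sum_range_succ', Ring.choose_zero_succ]
      using h_periodic.int_mul_eq m

theorem fwdDiff_eq_zero_of_fwdDiff_fwdDiff_eq_zero [IsAddTorsionFree A] {y : M}
    (hy : IsOfFinAddOrder y) {g : M → A} (hg : Δ_[y] (Δ_[y] g) = 0) : Δ_[y] g = 0 := by
  have h_periodic := fwdDiff_eq_zero_iff_periodic.1 hg
  ext x
  have h_telescope : addOrderOf y • Δ_[y] g x = 0 := by
    calc addOrderOf y • Δ_[y] g x
        = ∑ k ∈ range (addOrderOf y), Δ_[y] g (x + k • y) := by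
          simp only [h_periodic.nsmul _ x, sum_const, card_range]
      _ = g (x + addOrderOf y • y) - g x := by
          simpa [fwdDiff, succ_nsmul, add_assoc] using
            sum_range_sub (fun k ↦ g (x + k • y)) (addOrderOf y)
      _ = 0 := by rw [addOrderOf_nsmul_eq_zero, add_zero, sub_self]
  exact nsmul_right_injective hy.addOrderOf_pos.ne' (h_telescope.trans (nsmul_zero _).symm)

theorem fwdDiff_eq_zero_of_fwdDiff_iter_eq_zero [IsAddTorsionFree A] {y : M}
    (hy : IsOfFinAddOrder y) {f : M → A} {n : ℕ} (hf : Δ_[y] ^[n] f = 0) : Δ_[y] f = 0 := by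
  induction n generalizing f with
  | zero => ext; simp [show f = 0 from hf, fwdDiff]
  | succ n ih =>
    exact fwdDiff_eq_zero_of_fwdDiff_fwdDiff_eq_zero hy
      (ih (f := Δ_[y] f) (by rwa [← iterate_succ_apply]))

end FwdDiff

section GenPoly

variable {G G' : Type*} [AddCommGroup G] [AddCommGroup G']

theorem foldr_diffOp_replicate (y : G) (k : ℕ) (f : G → ℂ) :
    (List.replicate k y).foldr diffOp f = Δ_[y] ^[k] f := by
  induction k with
  | zero => rfl
  | succ k ih => rw [List.replicate_succ, List.foldr_cons, ih, iterate_succ_apply']; rfl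

theorem foldr_diffOp_fwdDiff (ys : List G) (y : G) (f : G → ℂ) :
    ys.foldr diffOp (Δ_[y] f) = Δ_[y] (ys.foldr diffOp f) := by
  induction ys with
  | nil => rfl
  | cons z ys ih => exact (congrArg (diffOp z) ih).trans (fwdDiff_comm z y _)

theorem foldr_diffOp_comp (φ : G' →+ G) (f : G → ℂ) (ys : List G') :
    ys.foldr diffOp (f ∘ φ) = (ys.map φ).foldr diffOp f ∘ φ := by
  induction ys with
  | nil => rfl
  | cons a ys ih =>
    ext x
    simp only [List.foldr_cons, List.map_cons, diffOp, ih, comp_apply, map_add]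

namespace IsGenPoly

variable {f : G → ℂ}

theorem exists_fwdDiff_iter_eq_zero (hf : IsGenPoly f) : ∃ n, ∀ y : G, Δ_[y] ^[n] f = 0 := by
  obtain ⟨n, hn⟩ := hf
  exact ⟨n + 1, fun y ↦ foldr_diffOp_replicate y (n + 1) f ▸ hn _ List.length_replicate⟩

theorem fwdDiff_iter (hf : IsGenPoly f) (y : G) (k : ℕ) : IsGenPoly (Δ_[y] ^[k] f) := by
  induction k with
  | zero => exact hf
  | succ k ih =>
    obtain ⟨n, hn⟩ := ih
    refine ⟨n, fun ys hys ↦ ?_⟩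
    rw [iterate_succ_apply', foldr_diffOp_fwdDiff, hn ys hys]
    ext; simp [fwdDiff]

theorem comp (hf : IsGenPoly f) (φ : G' →+ G) : IsGenPoly (f ∘ φ) := by
  obtain ⟨n, hn⟩ := hf
  refine ⟨n, fun ys hys ↦ ?_⟩
  rw [foldr_diffOp_comp, hn _ (by rwa [List.length_map])]
  rfl

theorem fwdDiff_eq_zero_of_isOfFinAddOrder (hf : IsGenPoly f) {y : G} (hy : IsOfFinAddOrder y) :
    Δ_[y] f = 0 := by
  obtain ⟨n, hn⟩ := hf.exists_fwdDiff_iter_eq_zero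
  exact fwdDiff_eq_zero_of_fwdDiff_iter_eq_zero hy (hn y)

theorem eq_comp_inl_comp_fst {T : Type*} [AddCommGroup T] (hT : IsAddTorsion T) {f : G × T → ℂ}
    (hf : IsGenPoly f) : f = (f ∘ AddMonoidHom.inl G T) ∘ AddMonoidHom.fst G T := by
  ext ⟨x, t⟩
  have h_periodic := fwdDiff_eq_zero_iff_periodic.1 <|
    hf.fwdDiff_eq_zero_of_isOfFinAddOrder ((AddMonoidHom.inr G T).isOfFinAddOrder (hT t))
  simpa using h_periodic (x, 0)

end IsGenPoly

end GenPoly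

section Poly

variable {G G' : Type*} [AddCommGroup G] [AddCommGroup G']

theorem IsPolyFn.comp {f : G → ℂ} (hf : IsPolyFn f) (φ : G' →+ G) : IsPolyFn (f ∘ φ) := by
  let precomp : (G → ℂ) →ₐ[ℂ] (G' → ℂ) := AlgHom.pi fun x ↦ Pi.evalAlgHom ℂ _ (φ x)
  have h_map : precomp f ∈ (Algebra.adjoin ℂ {a : G → ℂ | IsAdditiveFn a}).map precomp :=
    Subalgebra.mem_map.2 ⟨f, hf, rfl⟩
  rw [AlgHom.map_adjoin] at h_map
  refine Algebra.adjoin_mono ?_ h_map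
  rintro _ ⟨a, ha, rfl⟩ x y
  simpa [precomp] using ha (φ x) (φ y)

theorem isPolyFn_of_subsingleton [Subsingleton G] (f : G → ℂ) : IsPolyFn f := by
  have h_const : f = algebraMap ℂ (G → ℂ) (f 0) := funext fun x ↦ congrArg f (Subsingleton.elim x 0)
  rw [IsPolyFn, h_const]
  exact Subalgebra.algebraMap_mem _ _

theorem isPolyFn_choose (a : G →+ ℤ) (j : ℕ) :
    IsPolyFn fun x ↦ Ring.choose (a x : ℂ) j := by
  have ha : IsAdditiveFn fun x ↦ (a x : ℂ) := fun x y ↦ by simp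
  have h_eq : (fun x ↦ Ring.choose (a x : ℂ) j)
      = (j.factorial : ℂ)⁻¹ • Polynomial.aeval (fun x ↦ (a x : ℂ)) (descPochhammer ℤ j) := by
    ext x
    rw [Pi.smul_apply, Polynomial.aeval_pi_apply₂, Polynomial.aeval_eq_smeval, Ring.choose_eq_smul]
  rw [IsPolyFn, h_eq, ← Polynomial.aeval_map_algebraMap ℂ]
  exact Subalgebra.smul_mem _
    (Algebra.adjoin_mono (Set.singleton_subset_iff.2 (Set.mem_ofPred.2 ha))
      (Polynomial.aeval_mem_adjoin_singleton ℂ _)) _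

end Poly

section FreeCase

theorem isPolyFn_of_isGenPoly_of_addEquiv {G G' : Type*} [AddCommGroup G] [AddCommGroup G']
    (e : G ≃+ G') (h : ∀ g : G' → ℂ, IsGenPoly g → IsPolyFn g) {f : G → ℂ} (hf : IsGenPoly f) :
    IsPolyFn f := by
  simpa [comp_def] using (h _ (hf.comp e.symm.toAddMonoidHom)).comp e.toAddMonoidHom

theorem isPolyFn_of_isGenPoly_int_prod {H : Type*} [AddCommGroup H]
    (hH : ∀ g : H → ℂ, IsGenPoly g → IsPolyFn g) {f : ℤ × H → ℂ} (hf : IsGenPoly f) :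
    IsPolyFn f := by
  obtain ⟨n, hn⟩ := hf.exists_fwdDiff_iter_eq_zero
  have h_newton : f = ∑ j ∈ range n, (fun p : ℤ × H ↦ Ring.choose (p.1 : ℂ) j) *
      ((Δ_[((1 : ℤ), (0 : H))] ^[j] f ∘ AddMonoidHom.inr ℤ H) ∘ AddMonoidHom.snd ℤ H) := by
    ext ⟨m, h⟩
    have h_cast (j : ℕ) : ((Ring.choose m j : ℤ) : ℂ) = Ring.choose (m : ℂ) j :=
      Ring.map_choose (Int.castRingHom ℂ) m j
    simpa [h_cast] using shift_zsmul_eq_sum_choose_smul_fwdDiff_iter (hn (1, 0)) (0, h) m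
  rw [IsPolyFn, h_newton]
  refine Subalgebra.sum_mem _ fun j _ ↦
    Subalgebra.mul_mem _ (isPolyFn_choose (AddMonoidHom.fst ℤ H) j) ?_
  exact (hH _ ((hf.fwdDiff_iter _ j).comp _)).comp _

theorem isPolyFn_of_isGenPoly_pi_int : ∀ {n : ℕ} {f : (Fin n → ℤ) → ℂ}, IsGenPoly f → IsPolyFn f
  | 0, f, _ => isPolyFn_of_subsingleton f
  | _ + 1, _, hf =>
    isPolyFn_of_isGenPoly_of_addEquiv (Fin.consLinearEquiv ℤ fun _ ↦ ℤ).toAddEquiv.symm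
      (fun _ ↦ isPolyFn_of_isGenPoly_int_prod fun _ ↦ isPolyFn_of_isGenPoly_pi_int) hf

end FreeCase

/-- On a finitely generated abelian group, every generalized polynomial is a
polynomial. -/
theorem genPoly_isPoly_of_fg
    {G : Type*} [AddCommGroup G] [AddGroup.FG G]
    (f : G → ℂ) (hf : IsGenPoly f) : IsPolyFn f := by
  obtain ⟨n, ι, _, p, hp, e, ⟨eG⟩⟩ := AddCommGroup.equiv_free_prod_directSum_zmod G
  have (i : ι) : NeZero (p i ^ e i) := ⟨pow_ne_zero _ (hp i).ne_zero⟩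
  have : Finite (⨁ i, ZMod (p i ^ e i)) := by
    classical exact inferInstanceAs (Finite (Π₀ i, ZMod (p i ^ e i)))
  refine isPolyFn_of_isGenPoly_of_addEquiv eG (fun g hg ↦ ?_) hf
  have h_free : IsPolyFn (g ∘ AddMonoidHom.inl _ _) :=
    isPolyFn_of_isGenPoly_of_addEquiv (Finsupp.linearEquivFunOnFinite ℤ ℤ (Fin n)).toAddEquiv
      (fun _ ↦ isPolyFn_of_isGenPoly_pi_int) (hg.comp _)
  rw [hg.eq_comp_inl_comp_fst isAddTorsion_of_finite]
  exact h_free.comp _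
end

section
/- Let G be an abelian group, f : G → ℂ a function, and n a natural number. Then Δ_{y_1}Δ_{y_2}⋯Δ_{y_{n+1}} f = 0 for all y_1,…,y_{n+1} in G if and only if (Δ_y)^{n+1} f = 0 for all y in G (Djoković's equivalence of the two forms of Fréchet's functional equation). -/
/-!
Translations make `G → ℂ` a module over the group algebra `ℂ[G]`, on which `Δ_y` acts as
`e_y - 1`. In the quotient `R` of `ℂ[G]` by the annihilator of `f` the hypothesis reads
`(e_y - 1) ^ N = 0` for all `y` (with `N = n + 1`), and we must show `∏ i, (e_{y_i} - 1) = 0`.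
Writing `y_S = ∑ i ∈ S, y_i`, inclusion–exclusion gives
`0 = ∑ S, (-1) ^ (N - #S) * (e_{y_S} - 1) ^ N = Δ^N [k ↦ ∏ i, (e_{y_i} ^ k - 1)] 0`
`  = ∏ i, (e_{y_i} - 1) * Δ^N [k ↦ ∏ i, (1 + e_{y_i} + ⋯ + e_{y_i} ^ (k - 1))] 0`,
and modulo the nilradical the last factor is `Δ^N [k ↦ k ^ N] 0 = N!`, a unit of the
`ℚ`-algebra `R`.
-/

open Finset fwdDiff

lemma map_fwdDiff_iter {M G H F : Type*} [AddCommMonoid M] [AddCommGroup G] [AddCommGroup H]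
    [FunLike F G H] [AddMonoidHomClass F G H] (φ : F) (h : M) (f : M → G) (n : ℕ) (y : M) :
    φ ((Δ_[h])^[n] f y) = (Δ_[h])^[n] (φ ∘ f) y := by
  simp [fwdDiff_iter_eq_sum_shift]

section CommRing

variable {R : Type*} [CommRing R]

lemma fwdDiff_iter_pow_apply_zero (x : R) (n : ℕ) :
    (Δ_[1])^[n] (fun k : ℕ => x ^ k) 0 = (x - 1) ^ n := by
  simpa using fwdDiff_addChar_eq ⟨(x ^ ·), pow_zero x, pow_add x⟩ 0 1 n

lemma fwdDiff_iter_natCast_pow (n : ℕ) :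
    (Δ_[1])^[n] (fun k : ℕ => (k : R) ^ n) 0 = n.factorial := by
  simpa [fwdDiff_iter_eq_sum_shift] using congrFun (fwdDiff_iter_eq_factorial (R := R) (n := n)) 0

variable {ι : Type*} [Fintype ι]

lemma sum_neg_one_pow_mul_prod_sub_one_pow_eq_fwdDiff_iter [DecidableEq ι] (e : ι → R)
    (n : ℕ) :
    ∑ s : Finset ι, (-1) ^ #(univ \ s) * (∏ i ∈ s, e i - 1) ^ n
      = (Δ_[1])^[n] (fun k : ℕ => ∏ i, (e i ^ k - 1)) 0 := by
  have hexpand : (fun k : ℕ => ∏ i, (e i ^ k - 1))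
      = ∑ s : Finset ι, (-1 : R) ^ #(univ \ s) • fun k : ℕ => (∏ i ∈ s, e i) ^ k := by
    ext k
    simp [sub_eq_add_neg, prod_add, prod_pow, mul_comm]
  simp [hexpand, fwdDiff_iter_pow_apply_zero]

lemma isUnit_fwdDiff_iter_prod_geom_sum [Algebra ℚ R] (e : ι → R)
    (he : ∀ i, IsNilpotent (e i - 1)) :
    IsUnit ((Δ_[1])^[Fintype.card ι] (fun k : ℕ => ∏ i, ∑ j ∈ range k, e i ^ j) 0) := by
  set N := Fintype.card ι
  set c : ℕ → R := fun k => ∏ i, ∑ j ∈ range k, e i ^ j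
  let π := Ideal.Quotient.mk (nilradical R)
  have hπe : ∀ i, π (e i) = 1 := fun i =>
    (Ideal.Quotient.eq.2 (mem_nilradical.2 (he i))).trans (map_one π)
  have hπc : π ∘ c = fun k : ℕ => (k : R ⧸ nilradical R) ^ N := by
    funext k
    simp [c, hπe, N]
  have hπ : π ((Δ_[1])^[N] c 0) = π N.factorial := by
    rw [map_fwdDiff_iter, hπc, fwdDiff_iter_natCast_pow, map_natCast]
  have hnil : IsNilpotent ((Δ_[1])^[N] c 0 - N.factorial) :=
    mem_nilradical.1 (Ideal.Quotient.eq.1 hπ)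
  have hfac : IsUnit (N.factorial : R) := by
    simpa using (Nat.cast_ne_zero.2 N.factorial_ne_zero : (N.factorial : ℚ) ≠ 0).isUnit.map
      (algebraMap ℚ R)
  simpa using hnil.isUnit_add_left_of_commute hfac (Commute.all _ _)

theorem prod_sub_one_eq_zero_of_forall_prod_sub_one_pow_eq_zero [Algebra ℚ R] (e : ι → R)
    (he : ∀ s : Finset ι, (∏ i ∈ s, e i - 1) ^ Fintype.card ι = 0) :
    ∏ i, (e i - 1) = 0 := by
  classical
  set N := Fintype.card ι
  let c : ℕ → R := fun k => ∏ i, ∑ j ∈ range k, e i ^ j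
  have hfactor : (fun k : ℕ => ∏ i, (e i ^ k - 1)) = (∏ i, (e i - 1)) • c := by
    ext k
    simp [c, ← prod_mul_distrib, mul_geom_sum]
  have hvanish : (∏ i, (e i - 1)) * (Δ_[1])^[N] c 0 = 0 := by
    rw [← smul_eq_mul, ← Pi.smul_apply, ← fwdDiff_iter_const_smul, ← hfactor,
      ← sum_neg_one_pow_mul_prod_sub_one_pow_eq_fwdDiff_iter]
    exact sum_eq_zero fun s _ => by rw [he s, mul_zero]
  have hnil : ∀ i, IsNilpotent (e i - 1) := fun i => ⟨N, by simpa using he {i}⟩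
  exact (isUnit_fwdDiff_iter_prod_geom_sum e hnil).mul_left_eq_zero.1 hvanish

end CommRing

theorem AddChar.prod_sub_one_eq_zero_of_forall_sub_one_pow_eq_zero {G R ι : Type*}
    [AddCommMonoid G] [CommRing R] [Algebra ℚ R] [Fintype ι] (ψ : AddChar G R)
    (hψ : ∀ w, (ψ w - 1) ^ Fintype.card ι = 0) (v : ι → G) :
    ∏ i, (ψ (v i) - 1) = 0 := by
  refine prod_sub_one_eq_zero_of_forall_prod_sub_one_pow_eq_zero _ fun s => ?_
  rw [← hψ (∑ i ∈ s, v i)]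
  congr 2
  change ∏ i ∈ s, ψ.toMonoidHom (Multiplicative.ofAdd (v i))
    = ψ.toMonoidHom (Multiplicative.ofAdd (∑ i ∈ s, v i))
  rw [← map_prod, ofAdd_sum]

theorem List.foldr_replicate_eq_iterate {α β : Type*} (f : α → β → β) (y : α) (b : β) :
    ∀ n : ℕ, (List.replicate n y).foldr f b = (f y)^[n] b
  | 0 => rfl
  | n + 1 => by
    rw [List.replicate_succ, List.foldr_cons, List.foldr_replicate_eq_iterate f y b n,
      Function.iterate_succ_apply']

section Translation

def translationHom {G : Type*} [AddCommMonoid G] :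
    Multiplicative G →* Module.End ℂ (G → ℂ) where
  toFun y := LinearMap.funLeft ℂ ℂ (· + y.toAdd)
  map_one' := LinearMap.ext fun g => funext fun x => by simp [LinearMap.funLeft]
  map_mul' y z := LinearMap.ext fun g => funext fun x => by
    simp [LinearMap.funLeft, Module.End.mul_apply, add_assoc]

noncomputable def translationAlgHom {G : Type*} [AddCommMonoid G] :
    AddMonoidAlgebra ℂ G →ₐ[ℂ] Module.End ℂ (G → ℂ) :=
  AddMonoidAlgebra.lift ℂ _ G translationHom

variable {G : Type*} [AddCommGroup G]

lemma translationAlgHom_of'_sub_one (y : G) (g : G → ℂ) :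
    translationAlgHom (AddMonoidAlgebra.of' ℂ G y - 1) g = diffOp y g := by
  ext x
  simp [translationAlgHom, translationHom, LinearMap.funLeft, diffOp]

lemma foldr_diffOp_eq_translationAlgHom (f : G → ℂ) (ys : List G) :
    ys.foldr diffOp f
      = translationAlgHom (ys.map fun y => AddMonoidAlgebra.of' ℂ G y - 1).prod f := by
  induction ys with
  | nil => simp
  | cons y ys ih =>
    rw [List.foldr_cons, ih, List.map_cons, List.prod_cons, map_mul, Module.End.mul_apply,
      translationAlgHom_of'_sub_one]

def translationAnnihilator (f : G → ℂ) : Ideal (AddMonoidAlgebra ℂ G) where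
  carrier := {a | translationAlgHom a f = 0}
  add_mem' ha hb := by simp_all
  zero_mem' := by simp
  smul_mem' b a ha := by simp_all [Module.End.mul_apply]

noncomputable def annihilatorChar (f : G → ℂ) :
    AddChar G (AddMonoidAlgebra ℂ G ⧸ translationAnnihilator f) :=
  (Ideal.Quotient.mk _).toMonoidHom.compAddChar
    (AddChar.toMonoidHomEquiv.symm (AddMonoidAlgebra.of ℂ G))

lemma foldr_diffOp_eq_zero_iff (f : G → ℂ) (ys : List G) :
    ys.foldr diffOp f = 0 ↔ (ys.map fun y => annihilatorChar f y - 1).prod = 0 := by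
  have hmap : (ys.map fun y => annihilatorChar f y - 1)
      = (ys.map fun y => AddMonoidAlgebra.of' ℂ G y - 1).map (Ideal.Quotient.mk _) := by
    simp [annihilatorChar, AddMonoidAlgebra.of']
  rw [foldr_diffOp_eq_translationAlgHom, hmap, ← map_list_prod, Ideal.Quotient.eq_zero_iff_mem]
  rfl

lemma iterate_diffOp_eq_zero_iff (f : G → ℂ) (y : G) (m : ℕ) :
    (diffOp y)^[m] f = 0 ↔ (annihilatorChar f y - 1) ^ m = 0 := by
  simpa [List.foldr_replicate_eq_iterate] using foldr_diffOp_eq_zero_iff f (List.replicate m y)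

end Translation

/-- Djoković's theorem: the two forms of Fréchet's functional equation are
equivalent. -/
theorem frechet_iff_frechet_one_step
    {G : Type*} [AddCommGroup G] (f : G → ℂ) (n : ℕ) :
    (∀ ys : List G, ys.length = n + 1 → ys.foldr diffOp f = 0) ↔
      (∀ y : G, (diffOp y)^[n + 1] f = 0) := by
  refine ⟨fun h y => ?_, fun h ys hlen => ?_⟩
  · rw [← List.foldr_replicate_eq_iterate]
    exact h _ List.length_replicate
  · rw [foldr_diffOp_eq_zero_iff, ← Fin.prod_univ_fun_getElem]
    refine (annihilatorChar f).prod_sub_one_eq_zero_of_forall_sub_one_pow_eq_zero (fun w => ?_) _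
    rw [Fintype.card_fin, hlen, ← iterate_diffOp_eq_zero_iff]
    exact h w
end

section
/- Let G be the direct sum of countably many copies of ℤ (the group of finitely supported functions x : ℕ → ℤ with pointwise addition) and let f : G → ℂ be defined by f(x) = Σ_{i∈ℕ} x_i³. Then for every y in G the first difference Δ_y f, i.e. the function x ↦ f(x+y) − f(x), is a polynomial on G. -/
/-! The first difference of `x ↦ Σᵢ xᵢ³` in the direction `y` only involves the finitely many
coordinates in the support of `y`, and on coordinate `i` it is `(xᵢ + yᵢ)³ - xᵢ³`, a polynomial
in the additive coordinate function `x ↦ xᵢ`. -/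

open Polynomial

section PolyFn

variable {G : Type*} [AddCommGroup G]

theorem AddMonoidHom.isAdditiveFn (φ : G →+ ℂ) : IsAdditiveFn φ :=
  φ.map_add

theorem IsAdditiveFn.isPolyFn_eval {a : G → ℂ} (ha : IsAdditiveFn a) (p : ℂ[X]) :
    IsPolyFn fun x => p.eval (a x) := by
  have hp : aeval a p ∈ Algebra.adjoin ℂ {a} := aeval_mem_adjoin_singleton ℂ a
  rw [aeval_pi_apply] at hp
  exact Algebra.adjoin_mono (Set.singleton_subset_iff.mpr ha) hp

end PolyFn

theorem diffOp_finsuppSum {α M : Type*} [AddCommGroup M] (g : M → ℂ) (hg : g 0 = 0)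
    (y : α →₀ M) :
    diffOp y (fun x => x.sum fun _ => g) = ∑ i ∈ y.support, fun x => g (x i + y i) - g (x i) := by
  classical
  funext x
  have hsum (z : α →₀ M) (hz : z.support ⊆ x.support ∪ y.support) :
      z.sum (fun _ => g) = ∑ i ∈ x.support ∪ y.support, g (z i) :=
    Finsupp.sum_of_support_subset z hz _ fun _ _ => hg
  rw [diffOp, Finset.sum_apply, hsum _ Finsupp.support_add, hsum x Finset.subset_union_left,
    ← Finset.sum_sub_distrib]
  refine (Finset.sum_subset Finset.subset_union_right fun i _ hi => ?_).symm
  simp [Finsupp.notMem_support_iff.mp hi]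

/-- For `G = ⊕_{i ∈ ℕ} ℤ` and `f(x) = Σ_i x_i ^ 3`, every first difference `Δ_y f`
is a polynomial. -/
theorem firstDifference_sumCubes_isPoly
    (f : (ℕ →₀ ℤ) → ℂ) (hf : ∀ x : ℕ →₀ ℤ, f x = x.sum fun _ m => (m : ℂ) ^ 3) :
    ∀ y : ℕ →₀ ℤ, IsPolyFn (diffOp y f) := by
  intro y
  have hf' : f = fun x => x.sum fun _ m => (m : ℂ) ^ 3 := funext hf
  rw [hf', diffOp_finsuppSum (fun m : ℤ => (m : ℂ) ^ 3) (by simp)]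
  refine Subalgebra.sum_mem _ fun i _ => show IsPolyFn _ from ?_
  have hcoord : IsAdditiveFn fun x : ℕ →₀ ℤ => ((x i : ℤ) : ℂ) :=
    ((Int.castAddHom ℂ).comp (Finsupp.applyAddHom i)).isAdditiveFn
  convert hcoord.isPolyFn_eval ((X + C (y i : ℂ)) ^ 3 - X ^ 3) using 2
  simp
end

section
/- There exist an abelian group G and a fake polynomial f : G → ℂ of degree at least three such that for every y in G the first difference Δ_y f is a polynomial; in other words, the variety generated by the first differences of a fake polynomial need not contain any fake polynomial. (Witness: G = ⊕_{i∈ℕ} ℤ and f(x) = Σ_{i∈ℕ} x_i³.) -/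
/-!
The witness is `f x = ∑ᵢ xᵢ³` on `ℕ →₀ ℤ`. Its first difference
`Δ_y f x = ∑_{k ∈ supp y} ((x_k + y_k)³ - x_k³)` involves only finitely many coordinates, so it
is a polynomial in the additive coordinate functions and its cubic terms cancel, whence all fourth
differences of `f` vanish, while `Δ_{e₀}³ f = 6`.

`f` itself is not a polynomial: the translates of a polynomial span a finite-dimensional space
(true for additive functions and constants, and preserved by sums and products), whereas the
translates of `f` span the second differences `Δ_{eᵢ}² f x = 6 (xᵢ + 1)`, which are linearly
independent for `i ∈ ℕ`.
-/

open Pointwise in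
theorem IsPolyFn.exists_finite_translate_mem_span {G : Type*} [AddCommGroup G] {g : G → ℂ}
    (hg : IsPolyFn g) :
    ∃ S : Set (G → ℂ), S.Finite ∧ ∀ y, (fun x => g (x + y)) ∈ Submodule.span ℂ S := by
  induction hg using Algebra.adjoin_induction with
  | mem a ha =>
    refine ⟨{a, 1}, (Set.finite_singleton _).insert _, fun y => ?_⟩
    have : (fun x => a (x + y)) = a + a y • (1 : G → ℂ) := funext fun x => by simp [ha x y]
    rw [this]
    exact Submodule.add_mem _ (Submodule.subset_span (by simp))
      (Submodule.smul_mem _ _ (Submodule.subset_span (by simp)))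
  | algebraMap r =>
    refine ⟨{1}, Set.finite_singleton _, fun y => ?_⟩
    have : (fun x => algebraMap ℂ (G → ℂ) r (x + y)) = r • (1 : G → ℂ) := by
      funext x
      simp
    rw [this]
    exact Submodule.smul_mem _ _ (Submodule.subset_span rfl)
  | add u v _ _ hu hv =>
    obtain ⟨S, hS, hSu⟩ := hu
    obtain ⟨T, hT, hTv⟩ := hv
    exact ⟨S ∪ T, hS.union hT, fun y => Submodule.add_mem _
      (Submodule.span_mono Set.subset_union_left (hSu y))
      (Submodule.span_mono Set.subset_union_right (hTv y))⟩
  | mul u v _ _ hu hv =>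
    obtain ⟨S, hS, hSu⟩ := hu
    obtain ⟨T, hT, hTv⟩ := hv
    refine ⟨S * T, hS.mul hT, fun y => ?_⟩
    rw [← Submodule.span_mul_span]
    exact Submodule.mul_mem_mul (hSu y) (hTv y)

theorem translate_diffOp_mem {G : Type*} [AddCommGroup G] {g : G → ℂ} {V : Submodule ℂ (G → ℂ)}
    (hg : ∀ y, (fun x => g (x + y)) ∈ V) (z y : G) : (fun x => diffOp z g (x + y)) ∈ V := by
  have : (fun x => diffOp z g (x + y)) = (fun x => g (x + (y + z))) - fun x => g (x + y) :=
    funext fun x => by simp [diffOp, add_assoc]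
  rw [this]
  exact V.sub_mem (hg _) (hg _)

theorem isAdditiveFn_coord {ι : Type*} (k : ι) : IsAdditiveFn (fun x : ι →₀ ℤ => (x k : ℂ)) :=
  fun x y => by simp

theorem linearIndependent_coord_add_one (ι : Type*) :
    LinearIndependent ℂ (fun i : ι => fun x : ι →₀ ℤ => (x i : ℂ) + 1) := by
  classical
  let evalDiff : ((ι →₀ ℤ) → ℂ) →ₗ[ℂ] ι → ℂ :=
    LinearMap.pi fun j => LinearMap.proj (R := ℂ) (φ := fun _ => ℂ) (Finsupp.single j 1)
      - LinearMap.proj 0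
  refine LinearIndependent.of_comp evalDiff ?_
  convert Pi.linearIndependent_single_one ι ℂ using 1
  ext i j
  simp [evalDiff, Finsupp.single_apply, Pi.single_apply, eq_comm]

noncomputable def sumCubes : (ℕ →₀ ℤ) → ℂ := fun x => x.sum fun _ n => (n : ℂ) ^ 3

theorem sumCubes_eq_sum_of_support_subset (x : ℕ →₀ ℤ) {s : Finset ℕ} (h : x.support ⊆ s) :
    sumCubes x = ∑ k ∈ s, (x k : ℂ) ^ 3 :=
  Finsupp.sum_of_support_subset x h _ fun _ _ => by simp

theorem sumCubes_single (i : ℕ) (n : ℤ) : sumCubes (Finsupp.single i n) = (n : ℂ) ^ 3 := by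
  simp [sumCubes_eq_sum_of_support_subset _ Finsupp.support_single_subset]

theorem sumCubes_add (x y : ℕ →₀ ℤ) :
    sumCubes (x + y) = sumCubes x + ∑ k ∈ y.support, (((x k : ℂ) + y k) ^ 3 - (x k : ℂ) ^ 3) := by
  classical
  have hx : x.support ⊆ x.support ∪ y.support := Finset.subset_union_left
  have hy : y.support ⊆ x.support ∪ y.support := Finset.subset_union_right
  rw [sumCubes_eq_sum_of_support_subset _ Finsupp.support_add,
    sumCubes_eq_sum_of_support_subset _ hx,
    Finset.sum_subset hy fun k _ hk => by simp [Finsupp.notMem_support_iff.mp hk],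
    ← Finset.sum_add_distrib]
  refine Finset.sum_congr rfl fun k _ => ?_
  rw [Finsupp.add_apply, Int.cast_add]
  ring

theorem diffOp_sumCubes (y : ℕ →₀ ℤ) :
    diffOp y sumCubes = fun x => ∑ k ∈ y.support, (((x k : ℂ) + y k) ^ 3 - (x k : ℂ) ^ 3) :=
  funext fun x => by simp [diffOp, sumCubes_add]

theorem isPolyFn_diffOp_sumCubes (y : ℕ →₀ ℤ) : IsPolyFn (diffOp y sumCubes) := by
  let coord (k : ℕ) : (ℕ →₀ ℤ) → ℂ := fun x => (x k : ℂ)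
  have hcoord (k : ℕ) : coord k ∈ Algebra.adjoin ℂ {a | IsAdditiveFn a} :=
    Algebra.subset_adjoin (isAdditiveFn_coord k)
  have hrepr : diffOp y sumCubes =
      ∑ k ∈ y.support, ((coord k + algebraMap ℂ _ (y k : ℂ)) ^ 3 - coord k ^ 3) := by
    rw [diffOp_sumCubes]
    funext x
    simp [coord, Finset.sum_apply]
  rw [IsPolyFn, hrepr]
  exact Subalgebra.sum_mem _ fun k _ => Subalgebra.sub_mem _
    (Subalgebra.pow_mem _ (Subalgebra.add_mem _ (hcoord k) (Subalgebra.algebraMap_mem _ _)) 3)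
    (Subalgebra.pow_mem _ (hcoord k) 3)

theorem diffOp_diffOp_diffOp_diffOp_sumCubes (a b c d : ℕ →₀ ℤ) :
    diffOp a (diffOp b (diffOp c (diffOp d sumCubes))) = 0 := by
  rw [diffOp_sumCubes]
  funext x
  simp only [diffOp, Pi.zero_apply, Finsupp.add_apply, Int.cast_add, ← Finset.sum_sub_distrib]
  exact Finset.sum_eq_zero fun k _ => by ring

theorem isGenPoly_sumCubes : IsGenPoly sumCubes := by
  refine ⟨3, fun ys hys => ?_⟩
  obtain ⟨a, b, c, d, rfl⟩ := List.length_eq_four.mp hys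
  exact diffOp_diffOp_diffOp_diffOp_sumCubes a b c d

theorem diffOp_diffOp_diffOp_sumCubes_single_zero :
    diffOp (Finsupp.single 0 1) (diffOp (Finsupp.single 0 1) (diffOp (Finsupp.single 0 1)
      sumCubes)) 0 = 6 := by
  simp only [diffOp, zero_add, ← Finsupp.single_add, sumCubes_single]
  norm_num [sumCubes]

theorem diffOp_diffOp_sumCubes_single (i : ℕ) :
    diffOp (Finsupp.single i 1) (diffOp (Finsupp.single i 1) sumCubes) =
      fun x => 6 * ((x i : ℂ) + 1) := by
  funext x
  simp only [diffOp, add_assoc, ← Finsupp.single_add, sumCubes_add]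
  norm_num [Finsupp.support_single]
  ring

theorem not_isPolyFn_sumCubes : ¬ IsPolyFn sumCubes := by
  intro hpoly
  obtain ⟨S, hS, htranslate⟩ := hpoly.exists_finite_translate_mem_span
  have : FiniteDimensional ℂ (Submodule.span ℂ S) := FiniteDimensional.span_of_finite ℂ hS
  have hmem (i : ℕ) : (fun x : ℕ →₀ ℤ => (x i : ℂ) + 1) ∈ Submodule.span ℂ S := by
    have h6 := translate_diffOp_mem
      (translate_diffOp_mem htranslate (Finsupp.single i 1)) (Finsupp.single i 1) 0
    simp only [add_zero, diffOp_diffOp_sumCubes_single] at h6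
    convert Submodule.smul_mem _ (6 : ℂ)⁻¹ h6 using 1
    funext x
    simp
  exact Module.Finite.not_linearIndependent_of_infinite
    (fun i => (⟨_, hmem i⟩ : Submodule.span ℂ S))
    ((linearIndependent_coord_add_one ℕ).of_comp (Submodule.span ℂ S).subtype)

/-- There exist an abelian group `G` and a fake polynomial `f : G → ℂ` of degree at
least three all of whose first differences are polynomials. -/
theorem exists_fakePoly_with_poly_differences :
    ∃ (G : Type) (i : AddCommGroup G) (f : G → ℂ),
      @IsGenPoly G i f ∧
      ¬ (∀ ys : List G, ys.length = 3 → ys.foldr (@diffOp G i) f = 0) ∧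
      ¬ @IsPolyFn G i f ∧
      ∀ y : G, @IsPolyFn G i (@diffOp G i y f) := by
  refine ⟨ℕ →₀ ℤ, inferInstance, sumCubes, isGenPoly_sumCubes, fun h => ?_,
    not_isPolyFn_sumCubes, isPolyFn_diffOp_sumCubes⟩
  exact (by norm_num : (6 : ℂ) ≠ 0) (diffOp_diffOp_diffOp_sumCubes_single_zero.symm.trans
    (congrFun (h [_, _, _] rfl) 0))
end

section
/- Let G be an abelian group and let f : G → ℂ be a local polynomial which is not a generalized polynomial. Then for every natural number n there exists a subgroup H of G generated by two elements such that dim τ(f|_H) ≥ n + 1. -/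
/-- `f` is a local polynomial: its restriction to every finitely generated subgroup
is a polynomial. -/
def IsLocalPolyFn {G : Type*} [AddCommGroup G] (f : G → ℂ) : Prop :=
  ∀ H : AddSubgroup G, H.FG → IsPolyFn (fun x : H => f x)

section
variable {G H : Type*} [AddCommGroup G] [AddCommGroup H]
open Multiset

theorem diffOp_comm (y z : G) (f : G → ℂ) : diffOp y (diffOp z f) = diffOp z (diffOp y f) := by
  funext x
  simp only [diffOp, add_right_comm x y z]
  ring

instance : LeftCommutative (diffOp (G := G)) := ⟨diffOp_comm⟩

theorem diffOp_add_left (u v : G) (f : G → ℂ) :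
    diffOp (u + v) f = diffOp u f + diffOp v f + diffOp u (diffOp v f) := by
  funext x
  simp only [diffOp, Pi.add_apply, add_comm u v, add_assoc]
  ring

theorem diffOp_mul (y : G) (f g : G → ℂ) :
    diffOp y (f * g) = (fun x => f (x + y)) * diffOp y g + diffOp y f * g := by
  funext x
  simp only [diffOp, Pi.mul_apply, Pi.add_apply]
  ring

theorem diffOp_comp {σ ψ : H → G} (hσ : ∀ x z, σ (x + z) = σ x + ψ z) (z : H) (f : G → ℂ) :
    diffOp z (f ∘ σ) = diffOp (ψ z) f ∘ σ := by
  funext x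
  simp [diffOp, hσ]

theorem iterate_diffOp_comp (φ : H →+ G) (z : H) (f : G → ℂ) (m : ℕ) :
    (diffOp z)^[m] (f ∘ φ) = (diffOp (φ z))^[m] f ∘ φ :=
  (Function.Semiconj.iterate_right (f := (· ∘ φ))
    (fun f => (diffOp_comp (map_add φ) z f).symm) m f).symm

theorem foldr_replicate_diffOp (m : ℕ) (t : G) (f : G → ℂ) :
    (replicate m t).foldr diffOp f = (diffOp t)^[m] f := by
  induction m with
  | zero => rfl
  | succ m ih => rw [replicate_succ, foldr_cons, ih, Function.iterate_succ_apply']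

noncomputable def diffOpₗ (y : G) : Module.End ℂ (G → ℂ) :=
  LinearMap.funLeft ℂ ℂ (· + y) - LinearMap.id

@[simp]
theorem diffOpₗ_apply (y : G) (f : G → ℂ) : diffOpₗ y f = diffOp y f := rfl

@[simp]
theorem diffOp_zero (y : G) : diffOp y (0 : G → ℂ) = 0 := (diffOpₗ y).map_zero

variable (G) in
noncomputable def genPolyDegreeLT : ℕ → Submodule ℂ (G → ℂ)
  | 0 => ⊥
  | d + 1 => ⨅ y : G, (genPolyDegreeLT d).comap (diffOpₗ y)

theorem mem_genPolyDegreeLT_zero {f : G → ℂ} : f ∈ genPolyDegreeLT G 0 ↔ f = 0 :=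
  Submodule.mem_bot ℂ

theorem mem_genPolyDegreeLT_succ {d : ℕ} {f : G → ℂ} :
    f ∈ genPolyDegreeLT G (d + 1) ↔ ∀ y, diffOp y f ∈ genPolyDegreeLT G d := by
  simp [genPolyDegreeLT, Submodule.mem_iInf]

theorem genPolyDegreeLT_mono : Monotone (genPolyDegreeLT G) := by
  refine monotone_nat_of_le_succ fun d => ?_
  induction d with
  | zero => exact bot_le
  | succ d ih =>
    exact fun f hf => mem_genPolyDegreeLT_succ.2 fun y => ih (mem_genPolyDegreeLT_succ.1 hf y)

theorem eq_apply_zero_of_mem_genPolyDegreeLT_one {f : G → ℂ} (hf : f ∈ genPolyDegreeLT G 1)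
    (x : G) : f x = f 0 := by
  have := congrFun (mem_genPolyDegreeLT_zero.1 (mem_genPolyDegreeLT_succ.1 hf x)) 0
  simpa [diffOp, sub_eq_zero] using this

theorem comp_mem_genPolyDegreeLT {σ ψ : H → G} (hσ : ∀ x z, σ (x + z) = σ x + ψ z) :
    ∀ {d : ℕ} {f : G → ℂ}, f ∈ genPolyDegreeLT G d → f ∘ σ ∈ genPolyDegreeLT H d
  | 0, f, hf => by simp [mem_genPolyDegreeLT_zero.1 hf]
  | d + 1, f, hf => mem_genPolyDegreeLT_succ.2 fun z => by
      rw [diffOp_comp hσ]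
      exact comp_mem_genPolyDegreeLT hσ (mem_genPolyDegreeLT_succ.1 hf (ψ z))

theorem foldr_diffOp_mem_genPolyDegreeLT {a : ℕ} {f : G → ℂ} (s : Multiset G)
    (hf : f ∈ genPolyDegreeLT G (a + card s)) : s.foldr diffOp f ∈ genPolyDegreeLT G a := by
  induction s using Multiset.induction generalizing a with
  | empty => simpa using hf
  | cons y s ih =>
    rw [foldr_cons]
    exact mem_genPolyDegreeLT_succ.1 (ih (by rwa [card_cons, ← add_assoc, add_right_comm] at hf)) y

theorem iterate_diffOp_mem_genPolyDegreeLT {a m : ℕ} {f : G → ℂ}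
    (hf : f ∈ genPolyDegreeLT G (a + m)) (t : G) : (diffOp t)^[m] f ∈ genPolyDegreeLT G a := by
  rw [← foldr_replicate_diffOp]
  exact foldr_diffOp_mem_genPolyDegreeLT _ (by rwa [card_replicate])

theorem mem_genPolyDegreeLT_of_forall_foldr {d : ℕ} {f : G → ℂ}
    (hf : ∀ s : Multiset G, card s = d → s.foldr diffOp f = 0) : f ∈ genPolyDegreeLT G d := by
  induction d generalizing f with
  | zero => exact mem_genPolyDegreeLT_zero.2 (hf 0 rfl)
  | succ d ih =>
    refine mem_genPolyDegreeLT_succ.2 fun y => ih fun s hs => ?_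
    simpa using hf (s + {y}) (by simp [hs])

theorem isGenPoly_of_mem_genPolyDegreeLT {n : ℕ} {f : G → ℂ}
    (hf : f ∈ genPolyDegreeLT G (n + 1)) : IsGenPoly f :=
  ⟨n, fun ys hys => mem_genPolyDegreeLT_zero.1
    (foldr_diffOp_mem_genPolyDegreeLT (a := 0) (ys : Multiset G) (by simpa [hys] using hf))⟩

theorem mul_mem_genPolyDegreeLT {a b : ℕ} {f g : G → ℂ} (hf : f ∈ genPolyDegreeLT G a)
    (hg : g ∈ genPolyDegreeLT G b) : f * g ∈ genPolyDegreeLT G (a + b) := by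
  induction hab : a + b generalizing a b f g with
  | zero =>
    obtain rfl : a = 0 := by omega
    simp [mem_genPolyDegreeLT_zero.1 hf]
  | succ N ih =>
    refine mem_genPolyDegreeLT_succ.2 fun y => ?_
    rw [diffOp_mul]
    refine add_mem ?_ ?_
    · have hfy : (fun x => f (x + y)) ∈ genPolyDegreeLT G a :=
        comp_mem_genPolyDegreeLT (σ := (· + y)) (ψ := id) (fun _ _ => add_right_comm ..) hf
      cases b with
      | zero => simp [mem_genPolyDegreeLT_zero.1 hg]
      | succ b => exact ih hfy (mem_genPolyDegreeLT_succ.1 hg y) (by omega)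
    · cases a with
      | zero => simp [mem_genPolyDegreeLT_zero.1 hf]
      | succ a => exact ih (mem_genPolyDegreeLT_succ.1 hf y) hg (by omega)

theorem algebraMap_mem_genPolyDegreeLT_one (r : ℂ) :
    algebraMap ℂ (G → ℂ) r ∈ genPolyDegreeLT G 1 :=
  mem_genPolyDegreeLT_succ.2 fun y => mem_genPolyDegreeLT_zero.2 (funext fun x => by simp [diffOp])

theorem IsAdditiveFn.mem_genPolyDegreeLT_two {a : G → ℂ} (ha : IsAdditiveFn a) :
    a ∈ genPolyDegreeLT G 2 := by
  refine mem_genPolyDegreeLT_succ.2 fun y => ?_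
  have : diffOp y a = algebraMap ℂ (G → ℂ) (a y) := funext fun x => by simp [diffOp, ha x y]
  exact this ▸ algebraMap_mem_genPolyDegreeLT_one (a y)

variable (G) in
noncomputable def genPolySubalgebra : Subalgebra ℂ (G → ℂ) where
  carrier := {f | ∃ d, f ∈ genPolyDegreeLT G d}
  mul_mem' := by
    rintro _ _ ⟨a, ha⟩ ⟨b, hb⟩
    exact ⟨a + b, mul_mem_genPolyDegreeLT ha hb⟩
  add_mem' := by
    rintro _ _ ⟨a, ha⟩ ⟨b, hb⟩
    exact ⟨max a b, add_mem (genPolyDegreeLT_mono (le_max_left a b) ha)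
      (genPolyDegreeLT_mono (le_max_right a b) hb)⟩
  algebraMap_mem' r := ⟨1, algebraMap_mem_genPolyDegreeLT_one r⟩

theorem mem_genPolySubalgebra {f : G → ℂ} :
    f ∈ genPolySubalgebra G ↔ ∃ d, f ∈ genPolyDegreeLT G d :=
  Iff.rfl

theorem IsPolyFn.mem_genPolySubalgebra {f : G → ℂ} (hf : IsPolyFn f) :
    f ∈ genPolySubalgebra G :=
  Algebra.adjoin_le (fun _ ha => _root_.mem_genPolySubalgebra.2 ⟨2, ha.mem_genPolyDegreeLT_two⟩) hf

theorem mem_genPolyDegreeLT_of_forall_fg {d : ℕ} {f : G → ℂ}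
    (hf : ∀ K : AddSubgroup G, K.FG → (fun x : K => f x) ∈ genPolyDegreeLT K d) :
    f ∈ genPolyDegreeLT G d := by
  induction d generalizing f with
  | zero =>
    refine mem_genPolyDegreeLT_zero.2 (funext fun x => ?_)
    have hK := hf (AddSubgroup.closure {x}) ⟨{x}, by simp⟩
    exact congrFun (mem_genPolyDegreeLT_zero.1 hK) ⟨x, AddSubgroup.mem_closure_singleton_self x⟩
  | succ d ih =>
    classical
    refine mem_genPolyDegreeLT_succ.2 fun y => ih ?_
    rintro _ ⟨S, rfl⟩
    set K' := AddSubgroup.closure (↑(insert y S) : Set G)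
    have hK' : AddSubgroup.closure ↑S ≤ K' := AddSubgroup.closure_mono (by simp)
    have hy : y ∈ K' := AddSubgroup.subset_closure (by simp)
    have := mem_genPolyDegreeLT_succ.1 (hf K' ⟨_, rfl⟩) ⟨y, hy⟩
    exact comp_mem_genPolyDegreeLT (σ := AddSubgroup.inclusion hK') (map_add _) this

theorem exists_mem_genPolyDegreeLT_succ_notMem {d₀ m : ℕ} {f : G → ℂ}
    (hf : f ∈ genPolyDegreeLT G d₀) (hm : f ∉ genPolyDegreeLT G m) :
    ∃ d, m ≤ d ∧ f ∈ genPolyDegreeLT G (d + 1) ∧ f ∉ genPolyDegreeLT G d := by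
  induction d₀ with
  | zero => exact absurd (genPolyDegreeLT_mono (Nat.zero_le m) hf) hm
  | succ d ih =>
    by_cases hd : f ∈ genPolyDegreeLT G d
    · exact ih hd
    · refine ⟨d, ?_, hf, hd⟩
      by_contra! h
      exact hm (genPolyDegreeLT_mono h hf)

/-- A symmetric `d`-additive form, as a function of the multiset of its arguments; its values on
multisets of other cardinalities are irrelevant. -/
def IsSymmMultiadditive (d : ℕ) (c : Multiset G → ℂ) : Prop :=
  ∀ u v s, card s + 1 = d → c ((u + v) ::ₘ s) = c (u ::ₘ s) + c (v ::ₘ s)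

namespace IsSymmMultiadditive

variable {d : ℕ} {c : Multiset G → ℂ}

theorem cons (hc : IsSymmMultiadditive (d + 1) c) (w : G) :
    IsSymmMultiadditive d (fun s => c (w ::ₘ s)) := fun u v s hs => by
  simpa only [cons_swap w] using hc u v (w ::ₘ s) (by simp [hs])

variable (hc : IsSymmMultiadditive d c)
include hc

theorem map_zero_cons {s : Multiset G} (hs : card s + 1 = d) : c (0 ::ₘ s) = 0 := by
  have := hc 0 0 s hs
  rw [add_zero] at this
  linear_combination -this

theorem map_nsmul_cons {s : Multiset G} (hs : card s + 1 = d) (m : ℕ) (u : G) :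
    c ((m • u) ::ₘ s) = m * c (u ::ₘ s) := by
  induction m with
  | zero => simp [hc.map_zero_cons hs]
  | succ m ih =>
    rw [succ_nsmul, hc _ _ _ hs, ih]
    push_cast
    ring

theorem map_replicate_nsmul_add (m : ℕ) (u : G) :
    ∀ (j : ℕ) (s : Multiset G), j + card s = d →
      c (replicate j (m • u) + s) = (m : ℂ) ^ j * c (replicate j u + s) := by
  intro j
  induction j with
  | zero => simp
  | succ j ih =>
    intro s hs
    rw [replicate_succ, cons_add, hc.map_nsmul_cons (by simp; omega), ← add_cons,
      ih _ (by simp; omega), add_cons, ← cons_add, ← replicate_succ]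
    ring

theorem map_replicate_add_add (u v : G) :
    ∀ (r : ℕ) (s : Multiset G), r + card s = d →
      c (replicate r (u + v) + s) = ∑ i ∈ Finset.range (r + 1),
        (r.choose i : ℂ) * c (replicate i u + (replicate (r - i) v + s)) := by
  intro r
  induction r with
  | zero => simp
  | succ r ih =>
    intro s hs
    rw [replicate_succ, cons_add, hc _ _ _ (by simp; omega), ← add_cons, ← add_cons,
      ih _ (by simp; omega), ih _ (by simp; omega), add_comm,
      Finset.sum_choose_succ_mul (fun i j => c (replicate i u + (replicate j v + s)))]
    congr 1
    · refine Finset.sum_congr rfl fun i hi => ?_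
      rw [Nat.succ_sub (Finset.mem_range_succ_iff.1 hi), replicate_succ]
      simp only [add_cons, cons_add]
    · refine Finset.sum_congr rfl fun i _ => ?_
      simp only [replicate_succ, add_cons, cons_add]

end IsSymmMultiadditive

theorem IsSymmMultiadditive.map_cons_replicate_eq_zero {k : ℕ} {c : Multiset G → ℂ}
    (hc : IsSymmMultiadditive (k + 1) c) (hdiag : ∀ a, c (replicate (k + 1) a) = 0) (t v : G) :
    c (v ::ₘ replicate k t) = 0 := by
  set b : ℕ → ℂ := fun i => ((k + 1).choose i : ℂ) * c (replicate i t + replicate (k + 1 - i) v)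
  set p : Polynomial ℂ := ∑ i ∈ Finset.range (k + 2), Polynomial.monomial i (b i)
  -- By the binomial expansion `p.eval m = c ((m • t + v)^{k+1}) = 0` for all `m : ℕ`, and the
  -- coefficient `b k` of `X ^ k` in `p` is `(k + 1) * c (v ::ₘ replicate k t)`.
  have hroot (m : ℕ) : p.IsRoot m := by
    have := hc.map_replicate_add_add (m • t) v (k + 1) 0 rfl
    simp only [hdiag, add_zero] at this
    simp only [Polynomial.IsRoot, p, Polynomial.eval_finsetSum, Polynomial.eval_monomial, this]
    refine Finset.sum_congr rfl fun i hi => ?_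
    have := Finset.mem_range.1 hi
    rw [hc.map_replicate_nsmul_add m t i _ (by simp; omega)]
    simp only [b]; ring
  have hp : p = 0 := p.eq_zero_of_infinite_isRoot <|
    (Set.infinite_range_of_injective Nat.cast_injective).mono (Set.range_subset_iff.2 hroot)
  have hk : p.coeff k = b k := by
    rw [Polynomial.finsetSum_coeff, Finset.sum_eq_single k
      (fun i _ hik => by rw [Polynomial.coeff_monomial, if_neg hik])
      (fun hk => absurd (by simp) hk), Polynomial.coeff_monomial_same]
  rw [hp, Polynomial.coeff_zero, eq_comm] at hk
  simp only [b, Nat.choose_succ_self_right, Nat.add_sub_cancel_left, replicate_one] at hk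
  rw [← singleton_add, add_comm]
  exact (mul_eq_zero.1 hk).resolve_left (Nat.cast_ne_zero.2 k.succ_ne_zero)

theorem IsSymmMultiadditive.eq_zero_of_forall_replicate {d : ℕ} {c : Multiset G → ℂ}
    (hc : IsSymmMultiadditive d c) (hdiag : ∀ t, c (replicate d t) = 0) {s : Multiset G}
    (hs : card s = d) : c s = 0 := by
  induction d generalizing c s with
  | zero => simpa [card_eq_zero.1 hs] using hdiag 0
  | succ d ih =>
    obtain ⟨v, hv⟩ := card_pos_iff_exists_mem.1 (by omega : 0 < card s)
    obtain ⟨s, rfl⟩ := exists_cons_of_mem hv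
    exact ih (hc.cons v) (hc.map_cons_replicate_eq_zero hdiag · v) (by simpa using hs)

theorem isSymmMultiadditive_foldr_diffOp_apply_zero {d : ℕ} {f : G → ℂ}
    (hf : f ∈ genPolyDegreeLT G (d + 1)) :
    IsSymmMultiadditive d (fun s => s.foldr diffOp f 0) := fun u v s hs => by
  have h2 : s.foldr diffOp f ∈ genPolyDegreeLT G 2 :=
    foldr_diffOp_mem_genPolyDegreeLT s (by rw [add_comm]; subst hs; exact hf)
  have huv := mem_genPolyDegreeLT_zero.1 <|
    mem_genPolyDegreeLT_succ.1 (mem_genPolyDegreeLT_succ.1 h2 v) u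
  simp only [foldr_cons, diffOp_add_left, huv, Pi.add_apply, Pi.zero_apply, add_zero]

theorem mem_genPolyDegreeLT_of_forall_iterate_diffOp_eq_zero {d : ℕ} {f : G → ℂ}
    (hf : f ∈ genPolyDegreeLT G (d + 1)) (h : ∀ t, (diffOp t)^[d] f = 0) :
    f ∈ genPolyDegreeLT G d := by
  refine mem_genPolyDegreeLT_of_forall_foldr fun s hs => funext fun x => ?_
  rw [eq_apply_zero_of_mem_genPolyDegreeLT_one
    (foldr_diffOp_mem_genPolyDegreeLT s (by rwa [hs, add_comm])) x]
  exact (isSymmMultiadditive_foldr_diffOp_apply_zero hf).eq_zero_of_forall_replicate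
    (fun t => by simp [foldr_replicate_diffOp, h]) hs

theorem exists_iterate_diffOp_apply_ne_zero {d : ℕ} {f : G → ℂ}
    (hf : f ∈ genPolyDegreeLT G (d + 1)) (hf' : f ∉ genPolyDegreeLT G d) :
    ∃ t, ∀ x, (diffOp t)^[d] f x ≠ 0 := by
  by_contra! h
  refine hf' (mem_genPolyDegreeLT_of_forall_iterate_diffOp_eq_zero hf fun t => funext fun y => ?_)
  obtain ⟨x, hx⟩ := h t
  have hconst := eq_apply_zero_of_mem_genPolyDegreeLT_one
    (iterate_diffOp_mem_genPolyDegreeLT (a := 1) (by rwa [add_comm]) t)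
  rw [hconst y, ← hconst x, hx, Pi.zero_apply]

end

theorem Module.End.linearIndependent_pow_apply {K V : Type*} [DivisionRing K] [AddCommGroup V]
    [Module K V] (N : Module.End K V) {d : ℕ} {v : V} (hd : (N ^ d) v ≠ 0)
    (hd' : (N ^ (d + 1)) v = 0) : LinearIndependent K fun i : Fin (d + 1) => (N ^ (i : ℕ)) v := by
  induction d generalizing v with
  | zero => exact (linearIndependent_unique_iff (ι := Fin 1)).2 (by simpa using hd)
  | succ d ih =>
    have htail : Fin.tail (fun i : Fin (d + 2) => (N ^ (i : ℕ)) v) =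
        fun i : Fin (d + 1) => (N ^ (i : ℕ)) (N v) := by
      funext i
      simp only [Fin.tail, Fin.val_succ, pow_succ, Module.End.mul_apply]
    rw [linearIndependent_finSucc, htail]
    refine ⟨ih (by rwa [← Module.End.mul_apply, ← pow_succ])
      (by rwa [← Module.End.mul_apply, ← pow_succ]), fun hmem => hd ?_⟩
    refine Submodule.span_le (p := LinearMap.ker (N ^ (d + 1))).2 ?_ hmem
    rintro _ ⟨i, rfl⟩
    rw [SetLike.mem_coe, LinearMap.mem_ker, ← Module.End.mul_apply, ← Module.End.mul_apply,
      mul_assoc, ← pow_succ, ← pow_add, show d + 1 + (i + 1) = i + (d + 1 + 1) by omega, pow_add,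
      Module.End.mul_apply, hd', map_zero]

theorem natCast_succ_le_rank_variety {H : Type*} [AddCommGroup H] (g : H → ℂ) (t : H) {d : ℕ}
    (hd : (diffOp t)^[d] g ≠ 0) (hd' : (diffOp t)^[d + 1] g = 0) :
    ((d + 1 : ℕ) : Cardinal) ≤ Module.rank ℂ (variety g) := by
  set S := Submodule.span ℂ {h : H → ℂ | ∃ y, h = fun x => g (x + y)}
  have hS : S ≤ S.comap (diffOpₗ t) := Submodule.span_le.2 <| by
    rintro _ ⟨y, rfl⟩
    have : diffOpₗ t (fun x => g (x + y)) = (fun x => g (x + (t + y))) - fun x => g (x + y) := by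
      funext x
      simp [diffOp, add_assoc]
    rw [SetLike.mem_coe, Submodule.mem_comap, this]
    exact S.sub_mem (Submodule.subset_span ⟨_, rfl⟩) (Submodule.subset_span ⟨_, rfl⟩)
  have hmem (i : ℕ) : (diffOpₗ t ^ i) g ∈ variety g := S.le_topologicalClosure <| by
    induction i with
    | zero => exact Submodule.subset_span ⟨0, by simp⟩
    | succ i ih => rw [pow_succ', Module.End.mul_apply]; exact hS ih
  have hpow (i : ℕ) : (diffOpₗ t ^ i) g = (diffOp t)^[i] g := Module.End.pow_apply _ _ _
  have hli := (diffOpₗ t).linearIndependent_pow_apply (v := g) (hpow d ▸ hd) (hpow (d + 1) ▸ hd')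
  have hli' : LinearIndependent ℂ fun i : Fin (d + 1) => (⟨_, hmem i⟩ : variety g) :=
    .of_comp (variety g).subtype hli
  simpa using hli'.cardinal_lift_le_rank

/-- If a local polynomial `f` is not a generalized polynomial, then for every `n` there
is a subgroup `H` generated by two elements with `dim τ(f|_H) ≥ n + 1`. -/
theorem exists_two_generated_subgroup_of_not_genPoly
    {G : Type*} [AddCommGroup G] (f : G → ℂ)
    (hloc : IsLocalPolyFn f) (hng : ¬ IsGenPoly f) :
    ∀ n : ℕ, ∃ a b : G,
      ((n + 1 : ℕ) : Cardinal) ≤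
        Module.rank ℂ
          ↥(variety (fun x : (AddSubgroup.closure {a, b} : AddSubgroup G) => f x)) := by
  intro n
  obtain ⟨K, hK, hfK⟩ : ∃ K : AddSubgroup G, K.FG ∧
      (fun x : K => f x) ∉ genPolyDegreeLT K (n + 1) := by
    by_contra! h
    exact hng (isGenPoly_of_mem_genPolyDegreeLT (mem_genPolyDegreeLT_of_forall_fg h))
  obtain ⟨d₀, hd₀⟩ := mem_genPolySubalgebra.1 (hloc K hK).mem_genPolySubalgebra
  obtain ⟨d, hnd, hd, hd'⟩ := exists_mem_genPolyDegreeLT_succ_notMem hd₀ hfK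
  obtain ⟨t, ht⟩ := exists_iterate_diffOp_apply_ne_zero hd hd'
  refine ⟨t, t, le_trans (Nat.cast_le.2 (by omega : n + 1 ≤ d + 1)) ?_⟩
  have hHK : AddSubgroup.closure {(t : G), (t : G)} ≤ K := (AddSubgroup.closure_le K).2 (by simp)
  have hfH : (fun x : AddSubgroup.closure {(t : G), (t : G)} => f x) =
      (fun x : K => f x) ∘ AddSubgroup.inclusion hHK := rfl
  refine natCast_succ_le_rank_variety _ ⟨t, AddSubgroup.subset_closure (by simp)⟩ ?_ ?_
  · rw [hfH, iterate_diffOp_comp]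
    exact fun h => ht 0 (congrFun h 0)
  · rw [hfH, iterate_diffOp_comp, mem_genPolyDegreeLT_zero.1
      (iterate_diffOp_mem_genPolyDegreeLT (a := 0) (by rwa [zero_add]) _)]
    rfl
end

section
/- Let G be an abelian group and let f : G → ℂ be a polynomial, written f(x) = P(a_1(x),…,a_k(x)) with P : ℂ^k → ℂ an ordinary polynomial and a_1,…,a_k linearly independent additive functions. Then the variety τ(f) is spanned by the functions x ↦ (∂^α P)(a_1(x),…,a_k(x)), where α ranges over multi-indices with |α| ≤ deg P; consequently dim τ(f) ≤ (deg P + 1)^k. -/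
/-- The iterated partial derivative `∂^α P` of a polynomial in `k` variables,
for the multi-index `α`. -/
noncomputable def pderivMulti {k : ℕ} (α : Fin k → ℕ) (P : MvPolynomial (Fin k) ℂ) :
    MvPolynomial (Fin k) ℂ :=
  (List.finRange k).foldr (fun i Q => (MvPolynomial.pderiv i)^[α i] Q) P

/-
Taylor's formula `P(u + v) = ∑_α v^α / α! · (∂^α P)(u)` and additivity of the `a_i` expand each
translate as `f(x + y) = ∑_α a(y)^α / α! · (∂^α P)(a(x))`, so the translates lie in the span `S`
of the functions `(∂^α P) ∘ a`. Conversely, linearly independent additive functions are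
algebraically independent: a polynomial vanishing on the subgroup `a(G)` vanishes on the
`ℤ`-lattice generated by finitely many points of `a(G)` that span `ℂ^k`, hence everywhere. So the
functions `y ↦ a(y)^α` are linearly independent, the coefficients of the expansion can be
separated, and each `(∂^α P) ∘ a` is a combination of translates. Finally `S` is
finite-dimensional, hence closed for pointwise convergence, so it is the variety of `f`.
-/

open MvPolynomial Finset

theorem MvPolynomial.iterate_pderiv_monomial {R σ : Type*} [CommSemiring R] (i : σ) (n : ℕ)
    (s : σ →₀ ℕ) (c : R) :
    (pderiv i)^[n] (monomial s c) =
      monomial (s - Finsupp.single i n) (c * (s i).descFactorial n) := by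
  induction n with
  | zero => simp
  | succ n ih =>
    rw [Function.iterate_succ_apply', ih, pderiv_monomial, tsub_tsub, ← Finsupp.single_add,
      Finsupp.tsub_apply, Finsupp.single_eq_same, Nat.descFactorial_succ]
    push_cast
    ring_nf

theorem MvPolynomial.foldr_iterate_pderiv_monomial {R σ : Type*} [CommSemiring R]
    [DecidableEq σ] (α : σ → ℕ) {l : List σ} (hl : l.Nodup) (s : σ →₀ ℕ) (c : R) :
    l.foldr (fun i Q => (pderiv i)^[α i] Q) (monomial s c) =
      monomial (s - ∑ i ∈ l.toFinset, Finsupp.single i (α i))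
        (c * ∏ i ∈ l.toFinset, ((s i).descFactorial (α i) : R)) := by
  induction l with
  | nil => simp
  | cons i l ih =>
    obtain ⟨hi, hl⟩ := List.nodup_cons.1 hl
    have hi' : i ∉ l.toFinset := fun h => hi (List.mem_toFinset.1 h)
    have hsi : (s - ∑ j ∈ l.toFinset, Finsupp.single j (α j)) i = s i := by
      simp [Finsupp.single_apply, hi']
    rw [List.foldr_cons, ih hl, MvPolynomial.iterate_pderiv_monomial, hsi, List.toFinset_cons,
      sum_insert hi', prod_insert hi', tsub_tsub, add_comm (Finsupp.single i (α i))]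
    ring_nf

theorem MvPolynomial.aeval_pi_apply {R ι X : Type*} [CommSemiring R] (Q : MvPolynomial ι R)
    (a : ι → X → R) (y : X) : aeval a Q y = eval (fun i => a i y) Q := by
  induction Q using MvPolynomial.induction_on <;> simp_all

theorem MvPolynomial.eq_zero_of_forall_eval_sum_zsmul_eq_zero {K σ ι : Type*} [Field K]
    [CharZero K] [Fintype ι] {v : ι → σ → K} (hv : Submodule.span K (Set.range v) = ⊤)
    {Q : MvPolynomial σ K} (hQ : ∀ t : ι → ℤ, eval (∑ j, t j • v j) Q = 0) : Q = 0 := by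
  let g (i : σ) : MvPolynomial ι K := ∑ j, C (v j i) * X j
  have hcomp (c : ι → K) : eval c (bind₁ g Q) = eval (∑ j, c j • v j) Q := by
    have hg : (fun i => eval c (g i)) = ∑ j, c j • v j := by
      ext i
      simp [g, Finset.sum_apply, mul_comm]
    rw [eval, eval₂Hom_bind₁, ← eval, ← hg]
    rfl
  have hcomp0 : bind₁ g Q = 0 := by
    refine funext_set (fun _ => Set.range ((↑) : ℤ → K))
      (fun _ => Set.infinite_range_of_injective Int.cast_injective) fun c hc => ?_
    choose t ht using fun j => hc j (Set.mem_univ j)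
    obtain rfl : (fun j => (t j : K)) = c := _root_.funext ht
    simpa only [hcomp, Int.cast_smul_eq_zsmul, map_zero] using hQ t
  refine MvPolynomial.funext fun u => ?_
  obtain ⟨c, rfl⟩ :=
    (Submodule.mem_span_range_iff_exists_fun K).1 (hv ▸ Submodule.mem_top (x := u))
  rw [← hcomp, hcomp0, map_zero, map_zero]

theorem add_pow_eq_sum_range_of_le {R : Type*} [CommSemiring R] (x y : R) {n N : ℕ} (h : n ≤ N) :
    (x + y) ^ n = ∑ j ∈ range (N + 1), x ^ j * y ^ (n - j) * n.choose j := by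
  rw [add_pow]
  refine sum_subset (range_subset_range.2 (by omega)) fun j _ hj => ?_
  rw [Nat.choose_eq_zero_of_lt (by simpa using hj)]
  simp

theorem mem_piFinset_range_of_sum_le {ι : Type*} [Fintype ι] [DecidableEq ι] {α : ι → ℕ}
    {N : ℕ} (h : ∑ i, α i ≤ N) : α ∈ Fintype.piFinset fun _ => range (N + 1) :=
  Fintype.mem_piFinset.2 fun i => mem_range.2 <| Nat.lt_succ_of_le <|
    (single_le_sum (fun _ _ => Nat.zero_le _) (mem_univ i)).trans h

section LinearAlgebra

variable {K ι : Type*} [Field K] [Fintype ι]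

theorem span_range_eval_eq_top_of_linearIndependent {X : Type*} {m : ι → X → K}
    (hm : LinearIndependent K m) : Submodule.span K (Set.range fun x j => m j x) = ⊤ := by
  classical
  by_contra hne
  obtain ⟨l, hl0, hl⟩ :=
    Submodule.exists_dual_map_eq_bot_of_lt_top (lt_top_iff_ne_top.2 hne) inferInstance
  have hvanish (x : X) : ∑ j, m j x • l (fun j' => if j = j' then 1 else 0) = 0 := by
    rw [← l.pi_apply_eq_sum_univ, ← Submodule.mem_bot K, ← hl]
    exact Submodule.mem_map_of_mem (Submodule.subset_span ⟨x, rfl⟩)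
  have hcoeff := Fintype.linearIndependent_iff.1 hm _
    (funext fun x => by simpa [mul_comm] using hvanish x)
  exact hl0 (LinearMap.ext fun w => by simp [l.pi_apply_eq_sum_univ w, hcoeff])

theorem mem_span_range_of_forall_eq_sum_smul {X M : Type*} [AddCommGroup M] [Module K M]
    {m : ι → X → K} (hm : LinearIndependent K m) {g : ι → M} {F : X → M}
    (hF : ∀ x, F x = ∑ j, m j x • g j) (j : ι) : g j ∈ Submodule.span K (Set.range F) := by
  classical
  have htop : (Submodule.span K (Set.range F)).comap (Fintype.linearCombination K g) = ⊤ := by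
    refine eq_top_iff.2 ((span_range_eval_eq_top_of_linearIndependent hm).ge.trans ?_)
    rw [Submodule.span_le]
    rintro _ ⟨x, rfl⟩
    simpa [Fintype.linearCombination_apply, hF] using
      (Submodule.subset_span ⟨x, rfl⟩ : F x ∈ Submodule.span K (Set.range F))
  simpa using htop.ge (Submodule.mem_top (x := Pi.single j 1))

end LinearAlgebra

theorem algebraicIndependent_of_linearIndependent_addMonoidHom {G K ι : Type*} [AddCommGroup G]
    [Field K] [CharZero K] [Finite ι] {a : ι → G →+ K}
    (ha : LinearIndependent K fun i => ⇑(a i)) : AlgebraicIndependent K fun i => ⇑(a i) := by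
  have := Fintype.ofFinite ι
  refine algebraicIndependent_iff.2 fun Q hQ => ?_
  have hvanish (y : G) : eval (fun i => a i y) Q = 0 := by
    rw [← aeval_pi_apply, hQ, Pi.zero_apply]
  obtain ⟨b, hb, hb_span, hb_li⟩ := exists_linearIndependent K (Set.range fun y i => a i y)
  rw [span_range_eval_eq_top_of_linearIndependent ha] at hb_span
  have := hb_li.setFinite.fintype
  choose y hy using fun j : b => hb j.2
  refine eq_zero_of_forall_eval_sum_zsmul_eq_zero (v := ((↑) : b → ι → K))
    (by rwa [Subtype.range_coe]) fun t => ?_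
  have hsum : ∑ j, t j • (j : ι → K) = fun i => a i (∑ j, t j • y j) := by
    ext i
    simp [map_sum, ← hy, Finset.sum_apply]
  rw [hsum, hvanish]

theorem AlgebraicIndependent.linearIndependent_prod_pow {R A ι : Type*} [CommRing R]
    [CommRing A] [Algebra R A] [Fintype ι] {x : ι → A} (hx : AlgebraicIndependent R x) :
    LinearIndependent R fun α : ι → ℕ => ∏ i, x i ^ α i := by
  have hprod : (fun α : ι → ℕ => ∏ i, x i ^ α i) =
      (aeval x).toLinearMap ∘ basisMonomials ι R ∘ Finsupp.equivFunOnFinite.symm := by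
    ext α
    simp [aeval_monomial, Finsupp.prod_fintype]
  rw [hprod]
  exact ((basisMonomials ι R).linearIndependent.map_injOn _ hx.injOn).comp _
    Finsupp.equivFunOnFinite.symm.injective

section PartialDerivatives

variable {k : ℕ}

theorem pderivMulti_monomial (α : Fin k → ℕ) (s : Fin k →₀ ℕ) (c : ℂ) :
    pderivMulti α (monomial s c) =
      monomial (s - ∑ i, Finsupp.single i (α i))
        (c * ∏ i, ((s i).descFactorial (α i) : ℂ)) := by
  rw [pderivMulti, foldr_iterate_pderiv_monomial α (List.nodup_finRange k),
    List.toFinset_finRange]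

theorem eval_pderivMulti_monomial (α : Fin k → ℕ) (s : Fin k →₀ ℕ) (c : ℂ) (u : Fin k → ℂ) :
    eval u (pderivMulti α (monomial s c)) =
      c * ∏ i, (s i).descFactorial (α i) * u i ^ (s i - α i) := by
  simp [pderivMulti_monomial, eval_monomial, Finsupp.prod_fintype,
    Finsupp.single_apply, prod_mul_distrib, mul_assoc]

theorem pderivMulti_eq_linearMap (α : Fin k → ℕ) :
    pderivMulti α = ⇑((List.finRange k).foldr (fun i (L : Module.End ℂ (MvPolynomial (Fin k) ℂ)) =>
      (pderiv i).toLinearMap ^ α i * L) 1) := by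
  funext P
  rw [pderivMulti]
  induction List.finRange k with
  | nil => rfl
  | cons i l ih => simp [ih, Module.End.pow_apply]

theorem pderivMulti_sum {ι : Type*} (α : Fin k → ℕ) (S : Finset ι)
    (F : ι → MvPolynomial (Fin k) ℂ) :
    pderivMulti α (∑ s ∈ S, F s) = ∑ s ∈ S, pderivMulti α (F s) := by
  rw [pderivMulti_eq_linearMap, map_sum]

theorem pderivMulti_eq_zero_of_totalDegree_lt {α : Fin k → ℕ} {P : MvPolynomial (Fin k) ℂ}
    (h : P.totalDegree < ∑ i, α i) : pderivMulti α P = 0 := by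
  rw [P.as_sum, pderivMulti_sum]
  refine sum_eq_zero fun s hs => ?_
  obtain ⟨i, hi⟩ : ∃ i, s i < α i := by
    by_contra! hle
    have : ∑ i, α i ≤ s.degree := by
      rw [Finsupp.degree_eq_sum]; exact sum_le_sum fun i _ => hle i
    exact (h.trans_le this).not_ge (le_totalDegree hs)
  have hfactor : ((s i).descFactorial (α i) : ℂ) = 0 := by
    simp [Nat.descFactorial_eq_zero_iff_lt.2 hi]
  rw [pderivMulti_monomial, prod_eq_zero (mem_univ i) hfactor, mul_zero, monomial_zero]

theorem eval_add_monomial_eq_sum_pderivMulti (s : Fin k →₀ ℕ) (c : ℂ) {N : ℕ}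
    (hs : ∀ i, s i ≤ N) (u v : Fin k → ℂ) :
    eval (u + v) (monomial s c) =
      ∑ α ∈ Fintype.piFinset fun _ => range (N + 1),
        (∏ i, v i ^ α i) *
          ((∏ i, ((α i).factorial : ℂ))⁻¹ * eval u (pderivMulti α (monomial s c))) := by
  have hchoose (n j : ℕ) : (n.descFactorial j : ℂ) * (j.factorial : ℂ)⁻¹ = n.choose j := by
    have : (j.factorial : ℂ) ≠ 0 := by exact_mod_cast j.factorial_ne_zero
    rw [Nat.descFactorial_eq_factorial_mul_choose, Nat.cast_mul]
    field_simp
  simp only [eval_pderivMulti_monomial, eval_monomial,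
    Finsupp.prod_fintype _ _ (fun _ => pow_zero _), ← prod_inv_distrib, Pi.add_apply]
  calc c * ∏ i, (u i + v i) ^ s i
      = c * ∏ i, ∑ j ∈ range (N + 1), v i ^ j * ((j.factorial : ℂ)⁻¹ *
          ((s i).descFactorial j * u i ^ (s i - j))) := by
        congr 1
        refine prod_congr rfl fun i _ => ?_
        rw [add_comm, add_pow_eq_sum_range_of_le _ _ (hs i)]
        refine sum_congr rfl fun j _ => ?_
        rw [← hchoose]
        ring
    _ = _ := by
        rw [prod_univ_sum, mul_sum]
        refine sum_congr rfl fun α _ => ?_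
        simp only [prod_mul_distrib]
        ring

theorem eval_add_eq_sum_pderivMulti (P : MvPolynomial (Fin k) ℂ) {N : ℕ}
    (hN : P.totalDegree ≤ N) (u v : Fin k → ℂ) :
    eval (u + v) P =
      ∑ α ∈ Fintype.piFinset fun _ => range (N + 1),
        (∏ i, v i ^ α i) * ((∏ i, ((α i).factorial : ℂ))⁻¹ * eval u (pderivMulti α P)) := by
  calc eval (u + v) P = ∑ s ∈ P.support, eval (u + v) (monomial s (coeff s P)) := by
        conv_lhs => rw [P.as_sum]
        rw [map_sum]
    _ = _ := by
        have hdeg {s} (hs : s ∈ P.support) (i) : s i ≤ N :=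
          ((monomial_le_degreeOf i hs).trans (degreeOf_le_totalDegree P i)).trans hN
        rw [sum_congr rfl fun s hs => eval_add_monomial_eq_sum_pderivMulti s _ (hdeg hs) u v,
          sum_comm]
        refine sum_congr rfl fun α _ => ?_
        rw [← mul_sum, ← mul_sum, ← map_sum, ← pderivMulti_sum, ← P.as_sum]

end PartialDerivatives

theorem span_pderivMulti_le_span_image {X : Type*} {k : ℕ} (a : Fin k → X → ℂ)
    (P : MvPolynomial (Fin k) ℂ) :
    Submodule.span ℂ {g : X → ℂ | ∃ α : Fin k → ℕ, (∑ i, α i) ≤ P.totalDegree ∧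
        g = fun x => eval (fun i => a i x) (pderivMulti α P)} ≤
      Submodule.span ℂ ((fun α x => eval (fun i => a i x) (pderivMulti α P)) ''
        ↑(Fintype.piFinset fun _ : Fin k => range (P.totalDegree + 1))) := by
  refine Submodule.span_mono ?_
  rintro _ ⟨α, hα, rfl⟩
  exact Set.mem_image_of_mem _ (mem_piFinset_range_of_sum_le hα)

theorem rank_span_pderivMulti_le {X : Type*} {k : ℕ} (a : Fin k → X → ℂ)
    (P : MvPolynomial (Fin k) ℂ) :
    Module.rank ℂ (Submodule.span ℂ {g : X → ℂ | ∃ α : Fin k → ℕ,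
      (∑ i, α i) ≤ P.totalDegree ∧ g = fun x => eval (fun i => a i x) (pderivMulti α P)}) ≤
      (((P.totalDegree + 1) ^ k : ℕ) : Cardinal) := by
  classical
  have hle := span_pderivMulti_le_span_image a P
  rw [← coe_image] at hle
  refine (Submodule.rank_mono hle).trans ((rank_span_finset_le _).trans ?_)
  exact_mod_cast card_image_le.trans (by simp)

theorem finiteDimensional_span_pderivMulti {X : Type*} {k : ℕ} (a : Fin k → X → ℂ)
    (P : MvPolynomial (Fin k) ℂ) :
    FiniteDimensional ℂ (Submodule.span ℂ {g : X → ℂ | ∃ α : Fin k → ℕ,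
      (∑ i, α i) ≤ P.totalDegree ∧ g = fun x => eval (fun i => a i x) (pderivMulti α P)}) :=
  Module.rank_lt_aleph0_iff.1 ((rank_span_pderivMulti_le a P).trans_lt Cardinal.natCast_lt_aleph0)

section Variety

variable {G : Type*} [AddCommGroup G] {k : ℕ} {a : Fin k → G → ℂ} {P : MvPolynomial (Fin k) ℂ}
  {f : G → ℂ}

theorem translate_eq_sum_pderivMulti (ha : ∀ i, IsAdditiveFn (a i))
    (hf : ∀ x, f x = eval (fun i => a i x) P) (y : G) :
    (fun x => f (x + y)) =
      ∑ α ∈ Fintype.piFinset fun _ => range (P.totalDegree + 1),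
        (∏ i, a i ^ α i) y • ((∏ i, ((α i).factorial : ℂ))⁻¹ •
          fun x => eval (fun i => a i x) (pderivMulti α P)) := by
  ext x
  have hshift : (fun i => a i (x + y)) = (fun i => a i x) + fun i => a i y :=
    funext fun i => ha i x y
  simp [hf, hshift, eval_add_eq_sum_pderivMulti P le_rfl, Finset.sum_apply]

theorem span_translates_eq_span_pderivMulti (ha : ∀ i, IsAdditiveFn (a i))
    (hli : LinearIndependent ℂ a) (hf : ∀ x, f x = eval (fun i => a i x) P) :
    Submodule.span ℂ {g : G → ℂ | ∃ y : G, g = fun x => f (x + y)} =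
      Submodule.span ℂ {g : G → ℂ | ∃ α : Fin k → ℕ, (∑ i, α i) ≤ P.totalDegree ∧
        g = fun x => eval (fun i => a i x) (pderivMulti α P)} := by
  refine le_antisymm (Submodule.span_le.2 ?_) (Submodule.span_le.2 ?_)
  · rintro _ ⟨y, rfl⟩
    rw [translate_eq_sum_pderivMulti ha hf y]
    refine Submodule.sum_mem _ fun α _ => Submodule.smul_mem _ _ (Submodule.smul_mem _ _ ?_)
    by_cases hα : ∑ i, α i ≤ P.totalDegree
    · exact Submodule.subset_span ⟨α, hα, rfl⟩
    · simp only [pderivMulti_eq_zero_of_totalDegree_lt (not_le.1 hα), map_zero]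
      exact Submodule.zero_mem _
  · rintro _ ⟨α, hα, rfl⟩
    set box := Fintype.piFinset fun _ : Fin k => range (P.totalDegree + 1)
    have hαbox : α ∈ box := mem_piFinset_range_of_sum_le hα
    have hmonomials : LinearIndependent ℂ fun β : box => ∏ i, a i ^ β.1 i :=
      (algebraicIndependent_of_linearIndependent_addMonoidHom
        (a := fun i => AddMonoidHom.mk' (a i) (ha i)) hli).linearIndependent_prod_pow.comp _
        Subtype.val_injective
    have htranslates : {g : G → ℂ | ∃ y : G, g = fun x => f (x + y)} =
        Set.range fun y x => f (x + y) := by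
      ext g; simp [eq_comm]
    have hmem := mem_span_range_of_forall_eq_sum_smul hmonomials
      (fun y => (translate_eq_sum_pderivMulti ha hf y).trans (sum_coe_sort box _).symm)
      ⟨α, hαbox⟩
    rw [← htranslates] at hmem
    have hfact : (∏ i, ((α i).factorial : ℂ)) ≠ 0 :=
      prod_ne_zero_iff.2 fun i _ => by exact_mod_cast (α i).factorial_ne_zero
    simpa [smul_inv_smul₀ hfact] using Submodule.smul_mem _ (∏ i, ((α i).factorial : ℂ)) hmem

end Variety

/-- For a polynomial `f = P(a_1, …, a_k)` with linearly independent additive `a_i`,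
the variety `τ(f)` is spanned by the functions `x ↦ (∂^α P)(a_1(x), …, a_k(x))` with
`|α| ≤ deg P`; consequently `dim τ(f) ≤ (deg P + 1)^k`. -/
theorem variety_poly_eq_span_partials
    {G : Type*} [AddCommGroup G] (k : ℕ) (a : Fin k → G → ℂ)
    (ha : ∀ i, IsAdditiveFn (a i)) (hli : LinearIndependent ℂ a)
    (P : MvPolynomial (Fin k) ℂ) (f : G → ℂ)
    (hf : ∀ x, f x = MvPolynomial.eval (fun i => a i x) P) :
    variety f =
        Submodule.span ℂ
          {g : G → ℂ | ∃ α : Fin k → ℕ, (∑ i, α i) ≤ P.totalDegree ∧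
            g = fun x => MvPolynomial.eval (fun i => a i x) (pderivMulti α P)} ∧
      Module.rank ℂ ↥(variety f) ≤ (((P.totalDegree + 1) ^ k : ℕ) : Cardinal) := by
  have := finiteDimensional_span_pderivMulti a P
  have hvariety : variety f = _ :=
    (congrArg Submodule.topologicalClosure (span_translates_eq_span_pderivMulti ha hli hf)).trans
      (Submodule.closed_of_finiteDimensional _).submodule_topologicalClosure_eq
  exact ⟨hvariety, hvariety ▸ rank_span_pderivMulti_le a P⟩
end
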